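/- arXiv:2306.13796 — 10 statements merged into one kernel-verified Lean document; each statement's English description precedes it below -/
import Mathlib

section
/- Let Y be a finite set with |Y| = c, M ≥ 1, and σ : Y^M → S a function that is M-unambiguous, meaning for any two distinct diagonal vectors (y,...,y) and (y',...,y') with y ≠ y' we have σ(y,...,y) ≠ σ(y',...,y'). Let D be a distribution on X × Y, let f : X → Y be a classifier, define R^{01}(f) = P_{(x,y)~D}(f(x) ≠ y) and R_P(f) = P(σ(f(X_1),...,f(X_M)) ≠ σ(Y_1,...,Y_M)) where (X_i,Y_i) are i.i.d. from D. Then R^{01}(f) ≤ (c^{2M-2} · R_P(f))^{1/M}. -/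
/-!
Write `E (l, l') = P(Y = l ∧ f X = l')`. The zero-one risk is the sum of `E` over the `c (c - 1)`
off-diagonal pairs, so by the power-mean inequality its `M`-th power is at most
`(c²)^(M-1) ∑ E (l, l')^M`. Now `E (l, l')^M` is the probability that all `M` draws have gold
label `l` and prediction `l'`; these events are disjoint for different pairs, and each of them
forces a partial-label error by `M`-unambiguity. Hence `∑ E (l, l')^M ≤ R_P(f)`.
-/

open scoped ENNReal

namespace ENNReal

theorem tsum_pi_prod {n : ℕ} {α : Fin n → Type*} (f : ∀ i, α i → ℝ≥0∞) :
    ∑' w : (∀ i, α i), ∏ i, f i (w i) = ∏ i, ∑' a, f i a := by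
  induction n with
  | zero => simp
  | succ n ih =>
    rw [← (Fin.consEquiv α).tsum_eq, ENNReal.tsum_prod', Fin.prod_univ_succ]
    simp only [Fin.consEquiv_apply, Fin.prod_univ_succ, Fin.cons_zero, Fin.cons_succ,
      ENNReal.tsum_mul_left, ENNReal.tsum_mul_right, ih]

theorem tsum_indicator_pow {α : Type*} (μ : α → ℝ≥0∞) (A : Set α) (n : ℕ) :
    (∑' a, A.indicator μ a) ^ n
      = ∑' w : Fin n → α, (Set.univ.pi fun _ => A).indicator (fun w => ∏ i, μ (w i)) w := by
  rw [← Fin.prod_const, ← tsum_pi_prod]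
  refine tsum_congr fun w => ?_
  by_cases hw : ∀ i, w i ∈ A
  · simp [Set.indicator_of_mem, hw]
  · obtain ⟨i, hi⟩ := not_forall.mp hw
    rw [Set.indicator_of_notMem (by simpa using ⟨i, hi⟩),
      Finset.prod_eq_zero (Finset.mem_univ i) (Set.indicator_of_notMem hi _)]

theorem pow_sum_le_card_pow_mul_sum_pow {ι : Type*} (s : Finset ι) (f : ι → ℝ≥0∞)
    {n : ℕ} (hn : 1 ≤ n) :
    (∑ i ∈ s, f i) ^ n ≤ (s.card : ℝ≥0∞) ^ (n - 1) * ∑ i ∈ s, f i ^ n := by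
  have h := rpow_sum_le_const_mul_sum_rpow s f (p := n) (by exact_mod_cast hn)
  rw [← Nat.cast_one, ← Nat.cast_sub hn] at h
  simpa only [rpow_natCast] using h

end ENNReal

namespace PMF

variable {X Y : Type*}

/-- `D.confusion f (l, l')` is the paper's `E_{l,l'}(f) = P(Y = l ∧ f X = l')`. -/
noncomputable def confusion (D : PMF (X × Y)) (f : X → Y) : PMF (Y × Y) :=
  D.map fun z => (z.2, f z.1)

theorem tsum_misclassified_eq_sum_confusion [Fintype Y] [DecidableEq Y] (D : PMF (X × Y))
    (f : X → Y) :
    (∑' z : X × Y, if f z.1 ≠ z.2 then D z else 0)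
      = ∑ p ∈ Finset.univ.offDiag, D.confusion f p := by
  rw [← toOuterMeasure_apply_finset, confusion, toOuterMeasure_map_apply, toOuterMeasure_apply]
  refine tsum_congr fun z => ?_
  classical
  rw [Set.indicator_apply]
  simp [ne_comm]

theorem confusion_pow_eq_tsum_indicator (D : PMF (X × Y)) (f : X → Y) (p : Y × Y) (M : ℕ) :
    D.confusion f p ^ M = ∑' w : Fin M → X × Y,
      {w | ∀ i, (w i).2 = p.1 ∧ f (w i).1 = p.2}.indicator (fun w => ∏ i, D (w i)) w := by
  rw [← toOuterMeasure_apply_singleton, confusion, toOuterMeasure_map_apply,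
    toOuterMeasure_apply, ENNReal.tsum_indicator_pow]
  congr! with w
  ext w
  simp [Prod.ext_iff, eq_comm]

theorem sum_offDiag_confusion_pow_le {S : Type*} [Fintype Y] [DecidableEq Y] [DecidableEq S]
    {M : ℕ} (hM : 1 ≤ M) (σ : (Fin M → Y) → S)
    (hσ : ∀ y y' : Y, y ≠ y' → σ (fun _ => y) ≠ σ (fun _ => y'))
    (D : PMF (X × Y)) (f : X → Y) :
    ∑ p ∈ Finset.univ.offDiag, D.confusion f p ^ M
      ≤ ∑' w : Fin M → X × Y, (∏ i, D (w i)) *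
          (if σ (fun i => f (w i).1) ≠ σ (fun i => (w i).2) then 1 else 0) := by
  classical
  set B : Y × Y → Set (Fin M → X × Y) := fun p => {w | ∀ i, (w i).2 = p.1 ∧ f (w i).1 = p.2}
  set C : Set (Fin M → X × Y) := {w | σ (fun i => f (w i).1) ≠ σ (fun i => (w i).2)}
  have hdisj : (Set.univ : Set (Y × Y)).PairwiseDisjoint B := by
    intro p _ q _ hpq
    refine Set.disjoint_left.mpr fun w hp hq => hpq ?_
    obtain ⟨hp1, hp2⟩ := hp ⟨0, hM⟩
    obtain ⟨hq1, hq2⟩ := hq ⟨0, hM⟩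
    exact Prod.ext (hp1.symm.trans hq1) (hp2.symm.trans hq2)
  have hsub : ∀ p ∈ Finset.univ.offDiag, B p ⊆ C := by
    intro p hp w hw
    have hlabels : (fun i => (w i).2) = fun _ => p.1 := funext fun i => (hw i).1
    have hpreds : (fun i => f (w i).1) = fun _ => p.2 := funext fun i => (hw i).2
    simp only [C, Set.mem_ofPred_eq, hlabels, hpreds]
    exact hσ _ _ (Finset.mem_offDiag.mp hp).2.2.symm
  calc ∑ p ∈ Finset.univ.offDiag, D.confusion f p ^ M
      = ∑' w, (⋃ p ∈ Finset.univ.offDiag, B p).indicator (fun w => ∏ i, D (w i)) w := by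
        simp only [confusion_pow_eq_tsum_indicator]
        rw [← Summable.tsum_finsetSum fun _ _ => ENNReal.summable]
        exact tsum_congr fun w =>
          (Finset.indicator_biUnion_apply _ _ (hdisj.subset (Set.subset_univ _)) w).symm
    _ ≤ ∑' w, C.indicator (fun w => ∏ i, D (w i)) w :=
        ENNReal.tsum_le_tsum fun w =>
          Set.indicator_le_indicator_of_subset (Set.iUnion₂_subset hsub) (fun _ => zero_le) w
    _ = _ := tsum_congr fun w => by simp [Set.indicator_apply, C]

end PMF

/-- If `σ` is `M`-unambiguous, the zero-one classification risk is bounded by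
`(c^(2M-2) · R_P(f))^(1/M)`, where `R_P` is the zero-one partial risk over `M`
i.i.d. draws from `D`. -/
theorem stmt1 {X Y S : Type*} [Fintype Y] [DecidableEq Y] [DecidableEq S]
    (c M : ℕ) (hc : Fintype.card Y = c) (hM : 1 ≤ M)
    (σ : (Fin M → Y) → S)
    (hσ : ∀ y y' : Y, y ≠ y' → σ (fun _ => y) ≠ σ (fun _ => y'))
    (D : PMF (X × Y)) (f : X → Y) :
    (∑' z : X × Y, if f z.1 ≠ z.2 then D z else 0)
      ≤ ((c : ℝ≥0∞) ^ (2 * M - 2) *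
          ∑' w : Fin M → X × Y,
            (∏ i, D (w i)) *
              (if σ (fun i => f (w i).1) ≠ σ (fun i => (w i).2) then 1 else 0))
        ^ ((M : ℝ)⁻¹) := by
  rw [ENNReal.le_rpow_inv_iff (by positivity), ENNReal.rpow_natCast,
    PMF.tsum_misclassified_eq_sum_confusion]
  have hcard : ((Finset.univ : Finset Y).offDiag.card : ℝ≥0∞) ≤ (c : ℝ≥0∞) ^ 2 := by
    have := (Finset.univ : Finset Y).offDiag.card_le_univ
    rw [Fintype.card_prod, hc] at this
    exact_mod_cast this.trans_eq (sq c).symm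
  calc (∑ p ∈ Finset.univ.offDiag, D.confusion f p) ^ M
      ≤ ((Finset.univ : Finset Y).offDiag.card : ℝ≥0∞) ^ (M - 1) *
          ∑ p ∈ Finset.univ.offDiag, D.confusion f p ^ M :=
        ENNReal.pow_sum_le_card_pow_mul_sum_pow _ _ hM
    _ ≤ ((c : ℝ≥0∞) ^ 2) ^ (M - 1) * _ :=
        mul_le_mul' (pow_le_pow_left' hcard _) (PMF.sum_offDiag_confusion_pow_le hM σ hσ D f)
    _ = _ := by rw [← pow_mul, Nat.mul_sub_one]
end

section
/- If σ : Y^M → S is not M-unambiguous (i.e., there exist distinct labels y ≠ y' with σ(y,...,y) = σ(y',...,y')), then there exists a data distribution D on X × Y and a classifier f such that the partial risk R_P(f;σ) = 0 while the classification risk R^{01}(f) = 1. -/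
open scoped ENNReal

/-- If `σ` is not `M`-unambiguous (two distinct diagonal vectors share an image),
then there is a data distribution `D` and a classifier `f` with zero partial risk
but classification risk one. -/
theorem stmt2 {X Y S : Type*} [Nonempty X] [DecidableEq Y] [DecidableEq S]
    (M : ℕ) (hM : 1 ≤ M) (σ : (Fin M → Y) → S)
    (y y' : Y) (hyy : y ≠ y') (hσ : σ (fun _ => y) = σ (fun _ => y')) :
    ∃ (D : PMF (X × Y)) (f : X → Y),
      (∑' w : Fin M → X × Y,
          (∏ i, D (w i)) *
            (if σ (fun i => f (w i).1) ≠ σ (fun i => (w i).2) then (1 : ℝ≥0∞) else 0)) = 0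
      ∧ (∑' z : X × Y, if f z.1 ≠ z.2 then D z else 0) = 1 := by
  classical
  obtain ⟨x0⟩ := ‹Nonempty X›
  refine ⟨PMF.pure (x0, y), fun _ => y', ?_, ?_⟩
  · rw [ENNReal.tsum_eq_zero]
    intro w
    by_cases h : ∀ i, w i = (x0, y)
    · have h2 : (fun i => (w i).2) = fun _ => y := by
        funext i; rw [h i]
      rw [if_neg]
      · simp
      · rw [h2]
        simp [hσ.symm]
    · push_neg at h
      obtain ⟨i, hi⟩ := h
      have : (PMF.pure ((x0, y) : X × Y)) (w i) = 0 := by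
        simp [PMF.pure_apply, hi]
      rw [Finset.prod_eq_zero (Finset.mem_univ i) this, zero_mul]
  · have : (∑' z : X × Y, if (fun _ : X => y') z.1 ≠ z.2 then (PMF.pure (x0, y)) z else 0)
        = ∑' z : X × Y, (PMF.pure ((x0, y) : X × Y)) z := by
      refine tsum_congr fun z => ?_
      by_cases h : y' ≠ z.2
      · rw [if_pos h]
      · push_neg at h
        rw [if_neg (by simp [h]), PMF.pure_apply, if_neg]
        intro he
        exact hyy (h.trans (congrArg Prod.snd he)).symm
    rw [this, PMF.tsum_coe]
end

section
/- Let σ : Y^M → S be both 1-unambiguous and M-unambiguous, with |Y| = c. Then for any classifier f, R^{01}(f) ≤ R_P(f;σ) / (1 − (c^{2M-2} R_P(f;σ))^{1/M})^{M−1}, whenever the denominator is positive. In particular R^{01}(f) = O(R_P(f;σ)) as R_P(f;σ) → 0. -/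
open scoped ENNReal
open Finset

/-!
The partial risk `R_P` dominates the mass of every product event on which `σ` of the predicted
labels provably differs from `σ` of the true labels. Write `R` for the zero-one risk.

If changing coordinate `i₀` always changes `σ`, then every tuple misclassified at `i₀` and
correctly classified elsewhere counts, whence `R (1 - R)^(M-1) ≤ R_P`.

If `σ` separates constant tuples, then every tuple whose examples all have true label `a` and
predicted label `b ≠ a` counts. These events are disjoint for distinct `(a, b)`, so the entries
`q(a, b)` of the confusion matrix satisfy `∑_{a ≠ b} q(a, b)^M ≤ R_P`. As `R = ∑_{a ≠ b} q(a, b)`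
has at most `c²` terms, the power-mean inequality gives `R^M ≤ c^(2M-2) R_P`.

Inserting `R ≤ (c^(2M-2) R_P)^(1/M)` into the first bound gives the theorem.
-/

section ProductWeights

variable {Z : Type*}

theorem ENNReal.tsum_fin_pi_prod : ∀ {n : ℕ} (g : Fin n → Z → ℝ≥0∞),
    ∑' w : Fin n → Z, ∏ i, g i (w i) = ∏ i, ∑' z, g i z
  | 0, g => by simp
  | n + 1, g => by
    rw [← (Fin.consEquiv fun _ => Z).tsum_eq, ENNReal.tsum_prod', Fin.prod_univ_succ,
      ← tsum_fin_pi_prod fun i => g i.succ, ← ENNReal.tsum_mul_right]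
    simp [Fin.consEquiv, Fin.prod_univ_succ, ENNReal.tsum_mul_left]

theorem prod_tsum_indicator_eq_tsum_indicator_pi {n : ℕ} (g : Z → ℝ≥0∞) (s : Fin n → Set Z) :
    ∏ i, ∑' z, (s i).indicator g z =
      ∑' w, (Set.univ.pi s).indicator (fun w => ∏ i, g (w i)) w := by
  rw [← ENNReal.tsum_fin_pi_prod]
  refine tsum_congr fun w => ?_
  by_cases hw : w ∈ Set.univ.pi s
  · rw [Set.indicator_of_mem hw]
    exact prod_congr rfl fun i _ => Set.indicator_of_mem (hw i (Set.mem_univ i)) g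
  · obtain ⟨i, hi⟩ : ∃ i, w i ∉ s i := by simpa using hw
    rw [Set.indicator_of_notMem hw]
    exact prod_eq_zero (mem_univ i) (Set.indicator_of_notMem hi g)

theorem sum_prod_tsum_indicator_le {n : ℕ} {T : Type*} (g : Z → ℝ≥0∞) (t : Finset T)
    (s : T → Fin n → Set Z) (P : (Fin n → Z) → Prop) [DecidablePred P]
    (hdisj : (t : Set T).PairwiseDisjoint fun a => Set.univ.pi (s a))
    (hP : ∀ a ∈ t, Set.univ.pi (s a) ⊆ {w | P w}) :
    ∑ a ∈ t, ∏ i, ∑' z, (s a i).indicator g z ≤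
      ∑' w, (∏ i, g (w i)) * if P w then 1 else 0 := by
  simp_rw [prod_tsum_indicator_eq_tsum_indicator_pi,
    ← Summable.tsum_finsetSum fun _ _ => ENNReal.summable, ← indicator_biUnion_apply t _ hdisj]
  refine ENNReal.tsum_le_tsum fun w => ?_
  refine (Set.indicator_le_indicator_of_subset (Set.iUnion₂_subset hP)
    (fun _ => zero_le) w).trans_eq ?_
  simp [Set.indicator_apply]

theorem prod_tsum_indicator_le {n : ℕ} (g : Z → ℝ≥0∞) (s : Fin n → Set Z)
    (P : (Fin n → Z) → Prop) [DecidablePred P] (hP : Set.univ.pi s ⊆ {w | P w}) :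
    ∏ i, ∑' z, (s i).indicator g z ≤ ∑' w, (∏ i, g (w i)) * if P w then 1 else 0 := by
  simpa using sum_prod_tsum_indicator_le g {()} (fun _ => s) P (by simp) (by simpa using hP)

end ProductWeights

theorem ENNReal.pow_sum_le_card_pow_mul_sum_pow_s3 {ι : Type*} (s : Finset ι) (f : ι → ℝ≥0∞)
    {M : ℕ} (hM : M ≠ 0) : (∑ i ∈ s, f i) ^ M ≤ (#s : ℝ≥0∞) ^ (M - 1) * ∑ i ∈ s, f i ^ M := by
  have h := ENNReal.rpow_sum_le_const_mul_sum_rpow s f (p := M) (by exact_mod_cast hM.bot_lt)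
  rw [← Nat.cast_pred hM.bot_lt] at h
  simpa only [ENNReal.rpow_natCast] using h

theorem PMF.tsum_ite_eq_one_sub_tsum_ite_not {α : Type*} (D : PMF α) (P : α → Prop)
    [DecidablePred P] :
    (∑' a, if P a then D a else 0) = 1 - ∑' a, if ¬P a then D a else 0 := by
  have hsum : (∑' a, if P a then D a else 0) + (∑' a, if ¬P a then D a else 0) = 1 := by
    rw [← ENNReal.tsum_add, ← D.tsum_coe]
    exact tsum_congr fun a => by by_cases h : P a <;> simp [h]
  exact ENNReal.eq_sub_of_add_eq (ne_top_of_le_ne_top ENNReal.one_ne_top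
    (le_add_self.trans hsum.le)) hsum

section Classification

variable {X Y S : Type*} [DecidableEq Y] (D : PMF (X × Y)) (f : X → Y)

noncomputable def zeroOneRisk : ℝ≥0∞ := ∑' z : X × Y, if f z.1 ≠ z.2 then D z else 0

noncomputable def partialRisk [DecidableEq S] {M : ℕ} (σ : (Fin M → Y) → S) : ℝ≥0∞ :=
  ∑' w : Fin M → X × Y,
    (∏ i, D (w i)) * if σ (fun i => f (w i).1) ≠ σ (fun i => (w i).2) then 1 else 0

def confusionSet (p : Y × Y) : Set (X × Y) := {z | (z.2, f z.1) = p}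

theorem zeroOneRisk_eq_sum_offDiag [Fintype Y] :
    zeroOneRisk D f = ∑ p ∈ (univ : Finset Y).offDiag, ∑' z, (confusionSet f p).indicator D z := by
  rw [← Summable.tsum_finsetSum fun _ _ => ENNReal.summable]
  refine tsum_congr fun z => ?_
  simp [confusionSet, Set.indicator_apply, ne_comm]

theorem zeroOneRisk_pow_le_partialRisk [Fintype Y] [DecidableEq S] {M : ℕ} [NeZero M]
    (σ : (Fin M → Y) → S) (hσ : ∀ y y' : Y, y ≠ y' → σ (fun _ => y) ≠ σ (fun _ => y')) :
    zeroOneRisk D f ^ M ≤ (Fintype.card Y : ℝ≥0∞) ^ (2 * M - 2) * partialRisk D f σ := by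
  have hcard : ((univ : Finset Y).offDiag.card : ℝ≥0∞) ≤ (Fintype.card Y : ℝ≥0∞) ^ 2 := by
    rw [offDiag_card, card_univ]
    exact_mod_cast (Nat.sub_le _ _).trans (sq _).ge
  have hdisj : ((univ : Finset Y).offDiag : Set (Y × Y)).PairwiseDisjoint fun p =>
      Set.univ.pi fun _ : Fin M => confusionSet f p := by
    intro p _ p' _ hne
    refine Set.disjoint_left.2 fun w hw hw' => hne ?_
    exact (hw 0 (Set.mem_univ _)).symm.trans (hw' 0 (Set.mem_univ _))
  have hmis : ∀ p ∈ (univ : Finset Y).offDiag, Set.univ.pi (fun _ : Fin M => confusionSet f p) ⊆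
      {w | σ (fun i => f (w i).1) ≠ σ (fun i => (w i).2)} := by
    intro p hp w hw
    have hw' : ∀ i, (w i).2 = p.1 ∧ f (w i).1 = p.2 := fun i =>
      Prod.ext_iff.1 (hw i (Set.mem_univ i))
    have hpred : (fun i => f (w i).1) = fun _ => p.2 := funext fun i => (hw' i).2
    have htrue : (fun i => (w i).2) = fun _ => p.1 := funext fun i => (hw' i).1
    change σ _ ≠ σ _
    rw [hpred, htrue]
    exact hσ _ _ (mem_offDiag.1 hp).2.2.symm
  calc zeroOneRisk D f ^ M
      ≤ (#(univ : Finset Y).offDiag : ℝ≥0∞) ^ (M - 1) *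
          ∑ p ∈ (univ : Finset Y).offDiag, (∑' z, (confusionSet f p).indicator D z) ^ M := by
        rw [zeroOneRisk_eq_sum_offDiag]
        exact ENNReal.pow_sum_le_card_pow_mul_sum_pow_s3 _ _ (NeZero.ne M)
    _ ≤ ((Fintype.card Y : ℝ≥0∞) ^ 2) ^ (M - 1) * partialRisk D f σ := by
        gcongr
        have h := sum_prod_tsum_indicator_le D _ _ _ hdisj hmis
        simp only [prod_const, card_univ, Fintype.card_fin] at h
        exact h
    _ = (Fintype.card Y : ℝ≥0∞) ^ (2 * M - 2) * partialRisk D f σ := by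
        rw [← pow_mul]
        congr 2
        omega

theorem zeroOneRisk_mul_one_sub_pow_le_partialRisk [DecidableEq S] {M : ℕ} (σ : (Fin M → Y) → S)
    (hσ : ∃ i : Fin M, ∀ (y : Fin M → Y) (l' : Y), l' ≠ y i →
      σ (Function.update y i l') ≠ σ y) :
    zeroOneRisk D f * (1 - zeroOneRisk D f) ^ (M - 1) ≤ partialRisk D f σ := by
  obtain ⟨i₀, hi₀⟩ := hσ
  set s : Fin M → Set (X × Y) :=
    Function.update (fun _ => {z | f z.1 = z.2}) i₀ {z | f z.1 ≠ z.2} with hs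
  have hmass : ∏ i, ∑' z, (s i).indicator D z =
      zeroOneRisk D f * (1 - zeroOneRisk D f) ^ (M - 1) := by
    simp_rw [hs, Function.apply_update (fun _ t => ∑' z, Set.indicator t D z)]
    rw [prod_update_of_mem (mem_univ i₀), prod_const, card_sdiff]
    simp [Set.indicator_apply, zeroOneRisk, PMF.tsum_ite_eq_one_sub_tsum_ite_not]
  have hmis : Set.univ.pi s ⊆ {w | σ (fun i => f (w i).1) ≠ σ (fun i => (w i).2)} := by
    intro w hw
    have herr : f (w i₀).1 ≠ (w i₀).2 := by simpa [hs] using hw i₀ (Set.mem_univ _)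
    have hpred : (fun i => f (w i).1) = Function.update (fun i => (w i).2) i₀ (f (w i₀).1) := by
      funext i
      rcases eq_or_ne i i₀ with rfl | hi
      · simp
      · simpa [hs, hi] using hw i (Set.mem_univ _)
    change σ _ ≠ σ _
    rw [hpred]
    exact hi₀ _ _ herr
  rw [← hmass]
  exact prod_tsum_indicator_le D s _ hmis

end Classification

/-- If `σ` is both 1-unambiguous and `M`-unambiguous, then
`R⁰¹(f) ≤ R_P(f;σ) / (1 − (c^(2M−2) R_P(f;σ))^(1/M))^(M−1)` whenever the
denominator is positive. -/
theorem stmt3 {X Y S : Type*} [Fintype Y] [DecidableEq Y] [DecidableEq S]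
    (c M : ℕ) (hc : Fintype.card Y = c) (hM : 1 ≤ M)
    (σ : (Fin M → Y) → S)
    (hσM : ∀ y y' : Y, y ≠ y' → σ (fun _ => y) ≠ σ (fun _ => y'))
    (hσ1 : ∃ i : Fin M, ∀ (y : Fin M → Y) (l' : Y), l' ≠ y i →
      σ (Function.update y i l') ≠ σ y)
    (D : PMF (X × Y)) (f : X → Y)
    (R01 RP : ℝ≥0∞)
    (hR01 : R01 = ∑' z : X × Y, if f z.1 ≠ z.2 then D z else 0)
    (hRP : RP = ∑' w : Fin M → X × Y,
        (∏ i, D (w i)) *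
          (if σ (fun i => f (w i).1) ≠ σ (fun i => (w i).2) then 1 else 0))
    (hden : ((c : ℝ≥0∞) ^ (2 * M - 2) * RP) ^ ((M : ℝ)⁻¹) < 1) :
    R01 ≤ RP / (1 - ((c : ℝ≥0∞) ^ (2 * M - 2) * RP) ^ ((M : ℝ)⁻¹)) ^ (M - 1) := by
  obtain rfl : R01 = zeroOneRisk D f := hR01
  obtain rfl : RP = partialRisk D f σ := hRP
  subst hc
  have : NeZero M := ⟨by omega⟩
  set B := ((Fintype.card Y : ℝ≥0∞) ^ (2 * M - 2) * partialRisk D f σ) ^ ((M : ℝ)⁻¹)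
  have hR01B : zeroOneRisk D f ≤ B := by
    rw [ENNReal.le_rpow_inv_iff (by positivity), ENNReal.rpow_natCast]
    exact zeroOneRisk_pow_le_partialRisk D f σ hσM
  have hden₀ : (1 - B) ^ (M - 1) ≠ 0 := pow_ne_zero _ (tsub_pos_iff_lt.2 hden).ne'
  have hden_top : (1 - B) ^ (M - 1) ≠ ∞ :=
    ENNReal.pow_ne_top (ENNReal.sub_ne_top ENNReal.one_ne_top)
  rw [ENNReal.le_div_iff_mul_le (.inl hden₀) (.inl hden_top)]
  calc zeroOneRisk D f * (1 - B) ^ (M - 1)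
      ≤ zeroOneRisk D f * (1 - zeroOneRisk D f) ^ (M - 1) := by gcongr
    _ ≤ partialRisk D f σ := zeroOneRisk_mul_one_sub_pow_le_partialRisk D f σ hσ1
end

section
/- Let f be a scoring function assigning probability vectors f(x_i) ∈ Δ_c to each of M instances, let s be a partial label with preimage {y ∈ Y^M : σ(y) = s}, and let y^{(1)},...,y^{(k)} be the k most probable label vectors in this preimage under P_{f(x)}(y) = Π_{i=1}^M f^{y_i}(x_i). Define the top-k partial ℓ¹ loss as 1 − WMC(∨_{i=1}^k y^{(i)}, f(x)) and the zero-one partial loss as 1{σ(argmax predictions of f) ≠ s}. Then the zero-one partial loss is at most (k+1) times the top-k partial ℓ¹ loss, which in turn is at most (k+1) times the top-k semantic loss −log WMC(∨_{i=1}^k y^{(i)}, f(x)). -/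
/-!
If the argmax labelling `yf` is not in the preimage of `s`, it differs from the `k` vectors
`y⁽ⁱ⁾` and is at least as likely as each of them, so
`1 ≥ P(yf) + ∑ᵢ P(y⁽ⁱ⁾) ≥ (1 + 1/k) ∑ᵢ P(y⁽ⁱ⁾)`. The WMC of the conjunction `⋀ⱼ A_{j,vⱼ}` is
`P(v)`, so by the union bound the WMC of the disjunction is at most `∑ᵢ P(y⁽ⁱ⁾)`, and the first
inequality follows. The second is `1 - t ≤ -log t`, with `t > 0` because `k ≥ 1`.
-/

open Finset

section WeightedModelCounting

variable {ι Y : Type*} [Fintype ι] [Fintype Y]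

/-- An assignment `I` sets the Boolean variable `A_{j,y}` ("instance `j` has label `y`") to
`I j y`; the variables are independent and `A_{j,y}` is true with probability `p j y`. -/
def assignmentWeight (p : ι → Y → ℝ) (I : ι → Y → Bool) : ℝ :=
  ∏ j, ∏ y, if I j y then p j y else 1 - p j y

theorem assignmentWeight_nonneg {p : ι → Y → ℝ} (hp0 : ∀ j y, 0 ≤ p j y)
    (hp1 : ∀ j y, p j y ≤ 1) (I : ι → Y → Bool) : 0 ≤ assignmentWeight p I := by
  refine prod_nonneg fun j _ => prod_nonneg fun y _ => ?_
  split <;> linarith [hp0 j y, hp1 j y]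

def labelProb (p : ι → Y → ℝ) (v : ι → Y) : ℝ :=
  ∏ j, p j (v j)

variable [DecidableEq ι]

theorem sum_labelProb (p : ι → Y → ℝ) (hp : ∀ j, ∑ y, p j y = 1) : ∑ v, labelProb p v = 1 := by
  simp [labelProb, ← Fintype.prod_sum, hp]

variable [DecidableEq Y]

def wmc (p : ι → Y → ℝ) (φ : (ι → Y → Bool) → Prop) [DecidablePred φ] : ℝ :=
  ∑ I, if φ I then assignmentWeight p I else 0

theorem sum_prod_prod_eq_prod_prod_sum (q : ι → Y → Bool → ℝ) :
    ∑ I : ι → Y → Bool, ∏ j, ∏ y, q j y (I j y) = ∏ j, ∏ y, ∑ b, q j y b := by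
  simp_rw [Fintype.prod_sum]

theorem sum_assignmentWeight (p : ι → Y → ℝ) : ∑ I, assignmentWeight p I = 1 :=
  (sum_prod_prod_eq_prod_prod_sum fun j y b => if b then p j y else 1 - p j y).trans (by simp)

-- The decidability instances of specific predicates are left arbitrary so that these lemmas
-- match whatever instance elaboration chose, e.g. the one for `∃ i : Fin k, _`.
theorem wmc_forall_eq_labelProb (p : ι → Y → ℝ) (v : ι → Y)
    [DecidablePred fun I : ι → Y → Bool => ∀ j, I j (v j) = true] :
    wmc p (fun I => ∀ j, I j (v j) = true) = labelProb p v := by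
  -- the indicator of `∀ j, I j (v j)` is absorbed into the factors at the pairs `(j, v j)`
  let q : ι → Y → Bool → ℝ := fun j y b =>
    if b then p j y else if y = v j then 0 else 1 - p j y
  have hq : ∀ I : ι → Y → Bool,
      (if ∀ j, I j (v j) = true then assignmentWeight p I else 0) = ∏ j, ∏ y, q j y (I j y) := by
    intro I
    split_ifs with hI
    · refine prod_congr rfl fun j _ => prod_congr rfl fun y _ => ?_
      by_cases hy : y = v j
      · subst hy; simp [q, hI j]
      · simp [q, hy]
    · push Not at hI
      obtain ⟨j₀, hj₀⟩ := hI
      exact (prod_eq_zero (mem_univ j₀) (prod_eq_zero (mem_univ (v j₀)) (by simp [q, hj₀]))).symm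
  have hsum : ∀ j y, ∑ b, q j y b = if y = v j then p j y else 1 := by
    intro j y
    by_cases hy : y = v j <;> simp [q, hy]
  simp only [wmc, hq, sum_prod_prod_eq_prod_prod_sum, hsum, prod_ite_eq', mem_univ, if_true,
    labelProb]

theorem wmc_mono {p : ι → Y → ℝ} (hp0 : ∀ j y, 0 ≤ p j y) (hp1 : ∀ j y, p j y ≤ 1)
    {φ ψ : (ι → Y → Bool) → Prop} [DecidablePred φ] [DecidablePred ψ]
    (h : ∀ I, φ I → ψ I) : wmc p φ ≤ wmc p ψ := by
  refine sum_le_sum fun I _ => ?_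
  split_ifs with hφ hψ
  · exact le_rfl
  · exact absurd (h I hφ) hψ
  · exact assignmentWeight_nonneg hp0 hp1 I
  · exact le_rfl

theorem wmc_le_one {p : ι → Y → ℝ} (hp0 : ∀ j y, 0 ≤ p j y) (hp1 : ∀ j y, p j y ≤ 1)
    (φ : (ι → Y → Bool) → Prop) [DecidablePred φ] : wmc p φ ≤ 1 := by
  calc wmc p φ ≤ wmc p fun _ => True := wmc_mono hp0 hp1 fun _ _ => trivial
    _ = 1 := by simp [wmc, sum_assignmentWeight]

theorem wmc_exists_le_sum {κ : Type*} [Fintype κ] {p : ι → Y → ℝ} (hp0 : ∀ j y, 0 ≤ p j y)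
    (hp1 : ∀ j y, p j y ≤ 1) (φ : κ → (ι → Y → Bool) → Prop) [∀ i, DecidablePred (φ i)]
    [DecidablePred fun I => ∃ i, φ i I] :
    wmc p (fun I => ∃ i, φ i I) ≤ ∑ i, wmc p (φ i) := by
  simp only [wmc]
  rw [sum_comm]
  refine sum_le_sum fun I _ => ?_
  have hterm : ∀ i, 0 ≤ if φ i I then assignmentWeight p I else 0 := fun i => by
    split
    · exact assignmentWeight_nonneg hp0 hp1 I
    · exact le_rfl
  split_ifs with h
  · obtain ⟨i, hi⟩ := h
    simpa only [hi, if_true] using single_le_sum (fun i _ => hterm i) (mem_univ i)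
  · exact sum_nonneg fun i _ => hterm i

theorem wmc_exists_forall_le_sum_labelProb {κ : Type*} [Fintype κ] {p : ι → Y → ℝ}
    (hp0 : ∀ j y, 0 ≤ p j y) (hp1 : ∀ j y, p j y ≤ 1) (u : κ → ι → Y)
    [DecidablePred fun I : ι → Y → Bool => ∃ i, ∀ j, I j (u i j) = true] :
    wmc p (fun I => ∃ i, ∀ j, I j (u i j) = true) ≤ ∑ i, labelProb p (u i) :=
  (wmc_exists_le_sum hp0 hp1 fun i I => ∀ j, I j (u i j) = true).trans_eq
    (sum_congr rfl fun i _ => wmc_forall_eq_labelProb p (u i))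

theorem labelProb_le_wmc_exists_forall {κ : Type*} {p : ι → Y → ℝ}
    (hp0 : ∀ j y, 0 ≤ p j y) (hp1 : ∀ j y, p j y ≤ 1) (u : κ → ι → Y)
    [DecidablePred fun I : ι → Y → Bool => ∃ i, ∀ j, I j (u i j) = true] (i : κ) :
    labelProb p (u i) ≤ wmc p (fun I => ∃ i, ∀ j, I j (u i j) = true) :=
  (wmc_forall_eq_labelProb p (u i)).symm.trans_le (wmc_mono hp0 hp1 fun _ hI => ⟨i, hI⟩)

end WeightedModelCounting

theorem one_le_card_add_one_mul_one_sub_sum {α : Type*} [Fintype α] [DecidableEq α]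
    {P : α → ℝ} (hP0 : ∀ x, 0 ≤ P x) (hP1 : ∑ x, P x = 1) {T : Finset α} {v : α}
    (hv : v ∉ T) (hT : ∀ t ∈ T, P t ≤ P v) :
    1 ≤ (#T + 1) * (1 - ∑ t ∈ T, P t) := by
  have hmass : P v + ∑ t ∈ T, P t ≤ 1 := by
    rw [← sum_insert hv, ← hP1]
    exact sum_le_univ_sum_of_nonneg hP0
  have hcount : ∑ t ∈ T, P t ≤ #T * P v := by
    simpa using sum_le_card_nsmul T P (P v) hT
  have : (#T : ℝ) * P v ≤ #T * (1 - ∑ t ∈ T, P t) :=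
    mul_le_mul_of_nonneg_left (by linarith) (Nat.cast_nonneg _)
  linarith

theorem one_le_card_add_one_mul_one_sub_sum_labelProb {ι Y κ : Type*} [Fintype ι]
    [DecidableEq ι] [Fintype Y] [DecidableEq Y] [Fintype κ] {p : ι → Y → ℝ}
    (hp0 : ∀ j y, 0 ≤ p j y) (hp1 : ∀ j, ∑ y, p j y = 1) {u : κ → ι → Y}
    (hu : Function.Injective u) {v : ι → Y} (hv : ∀ i, u i ≠ v)
    (hmax : ∀ j y, p j y ≤ p j (v j)) :
    1 ≤ (Fintype.card κ + 1) * (1 - ∑ i, labelProb p (u i)) := by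
  have hv_notMem : v ∉ univ.image u := by
    simpa only [mem_image, mem_univ, true_and, not_exists] using hv
  have hle : ∀ t ∈ univ.image u, labelProb p t ≤ labelProb p v := by
    simp only [mem_image, mem_univ, true_and, forall_exists_index, forall_apply_eq_imp_iff]
    exact fun i => prod_le_prod (fun j _ => hp0 j _) fun j _ => hmax j _
  have h := one_le_card_add_one_mul_one_sub_sum (fun v => prod_nonneg fun j _ => hp0 j (v j))
    (sum_labelProb p hp1) hv_notMem hle
  rwa [card_image_of_injective _ hu, card_univ, sum_image fun i _ i' _ h => hu h] at h

theorem stmt7_general {Y S : Type*} [Fintype Y] [DecidableEq Y] [DecidableEq S]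
    (M k : ℕ) (hk : 1 ≤ k)
    (σ : (Fin M → Y) → S) (s : S)
    (p : Fin M → Y → ℝ)
    (hp0 : ∀ j y, 0 < p j y) (hp1 : ∀ j, ∑ y, p j y = 1)
    (yf : Fin M → Y) (hyf : ∀ j y, p j y ≤ p j (yf j))
    (yk : Fin k → Fin M → Y) (hinj : Function.Injective yk)
    (hpre : ∀ i, σ (yk i) = s) :
    ((if σ yf ≠ s then (1 : ℝ) else 0)
      ≤ (k + 1) *
        (1 - ∑ I : Fin M → Y → Bool,
          if (∃ i : Fin k, ∀ j, I j (yk i j) = true) then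
            ∏ j, ∏ y, (if I j y then p j y else 1 - p j y) else 0))
    ∧ ((k + 1) *
        (1 - ∑ I : Fin M → Y → Bool,
          if (∃ i : Fin k, ∀ j, I j (yk i j) = true) then
            ∏ j, ∏ y, (if I j y then p j y else 1 - p j y) else 0)
      ≤ (k + 1) *
        (-Real.log (∑ I : Fin M → Y → Bool,
          if (∃ i : Fin k, ∀ j, I j (yk i j) = true) then
            ∏ j, ∏ y, (if I j y then p j y else 1 - p j y) else 0))) := by
  have hp0' : ∀ j y, 0 ≤ p j y := fun j y => (hp0 j y).le
  have hp1' : ∀ j y, p j y ≤ 1 := fun j y =>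
    (single_le_sum (fun y _ => hp0' j y) (mem_univ y)).trans_eq (hp1 j)
  change _ ≤ _ * (1 - wmc p fun I => ∃ i, ∀ j, I j (yk i j) = true) ∧
    _ * (1 - wmc p fun I => ∃ i, ∀ j, I j (yk i j) = true) ≤
    _ * -Real.log (wmc p fun I => ∃ i, ∀ j, I j (yk i j) = true)
  set W := wmc p fun I => ∃ i, ∀ j, I j (yk i j) = true
  have hW_le_sum : W ≤ ∑ i, labelProb p (yk i) := wmc_exists_forall_le_sum_labelProb hp0' hp1' yk
  have hW_pos : 0 < W :=
    (prod_pos fun j _ => hp0 j _).trans_le (labelProb_le_wmc_exists_forall hp0' hp1' yk ⟨0, hk⟩)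
  refine ⟨?_, mul_le_mul_of_nonneg_left (by linarith [Real.log_le_sub_one_of_pos hW_pos])
    (by positivity)⟩
  split_ifs with hσ
  · have key := one_le_card_add_one_mul_one_sub_sum_labelProb (v := yf) hp0' hp1 hinj
      (fun i h => hσ (h ▸ hpre i)) hyf
    rw [Fintype.card_fin] at key
    nlinarith
  · nlinarith [wmc_le_one hp0' hp1' fun I => ∃ i, ∀ j, I j (yk i j) = true]

/-- The zero-one partial loss is at most `(k+1)` times the top-`k` partial `ℓ¹`
loss `1 − WMC(⋁ y⁽ⁱ⁾, f(x))`, which is at most `(k+1)` times the top-`k`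
semantic loss `−log WMC(⋁ y⁽ⁱ⁾, f(x))`. -/
theorem stmt7 {Y S : Type*} [Fintype Y] [DecidableEq Y] [DecidableEq S]
    (M k : ℕ) (hk : 1 ≤ k)
    (σ : (Fin M → Y) → S) (s : S)
    (p : Fin M → Y → ℝ)
    (hp0 : ∀ j y, 0 < p j y) (hp1 : ∀ j, ∑ y, p j y = 1)
    (yf : Fin M → Y) (hyf : ∀ j y, p j y ≤ p j (yf j))
    (yk : Fin k → Fin M → Y) (hinj : Function.Injective yk)
    (hpre : ∀ i, σ (yk i) = s)
    (htop : ∀ v : Fin M → Y, σ v = s → (∀ i, v ≠ yk i) →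
      ∀ i, ∏ j, p j (v j) ≤ ∏ j, p j (yk i j)) :
    ((if σ yf ≠ s then (1 : ℝ) else 0)
      ≤ (k + 1) *
        (1 - ∑ I : Fin M → Y → Bool,
          if (∃ i : Fin k, ∀ j, I j (yk i j) = true) then
            ∏ j, ∏ y, (if I j y then p j y else 1 - p j y) else 0))
    ∧ ((k + 1) *
        (1 - ∑ I : Fin M → Y → Bool,
          if (∃ i : Fin k, ∀ j, I j (yk i j) = true) then
            ∏ j, ∏ y, (if I j y then p j y else 1 - p j y) else 0)
      ≤ (k + 1) *
        (-Real.log (∑ I : Fin M → Y → Bool,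
          if (∃ i : Fin k, ∀ j, I j (yk i j) = true) then
            ∏ j, ∏ y, (if I j y then p j y else 1 - p j y) else 0))) :=
  stmt7_general M k hk σ s p hp0 hp1 yf hyf yk hinj hpre
end

section
/- Let [F] be a class of multiclass classifiers X → Y with Natarajan dimension d_[F] < ∞, |Y| = c, let G be a class of transitions Y^M → S such that the binary function class {(y,s) ↦ 1{σ'(y) ≠ s} : σ' ∈ G} has VC dimension d_G < ∞. Then the binary class H = {(x,s) ↦ 1{σ'(f(x_1),...,f(x_M)) ≠ s} : f ∈ [F], σ' ∈ G} over X^M × S has VC dimension at most 2((d_[F] + d_G) log(6M(d_[F] + d_G)) + 2 d_[F] log c). -/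
/-!
On a sample `C ⊆ X^M × S`, a classifier `f ∈ F` matters only through its values on the at most
`M |C|` points of `X` occurring in `C`, so by Natarajan's lemma it contributes at most
`(M |C| + 1)^dF c^(2 dF)` patterns. Once `f` is fixed, the labelling of `C` by `(f, σ')` depends
only on the behaviour of `1{σ'(y) ≠ s}` on the at most `|C|` points `(f ∘ x, s)`, of which there
are at most `(|C| + 1)^dG 2^dG` (the binary case of the same lemma). If `C` is shattered, `2^|C|`
is bounded by the product of the two counts; the bound on `|C|` follows by taking logarithms,
using `log t ≤ t / (6 (dF + dG)) + log (6 (dF + dG)) - 1` and `log 2 - 1/6 > 1/2`.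
-/

def BShatters {A : Type*} (H : Set (A → Bool)) (C : Finset A) : Prop :=
  ∀ b : A → Bool, ∃ h ∈ H, ∀ x ∈ C, h x = b x

def NShatters {A B : Type*} (H : Set (A → B)) (C : Finset A) : Prop :=
  ∃ h₀ h₁ : A → B, (∀ x ∈ C, h₀ x ≠ h₁ x) ∧
    ∀ B' ⊆ C, ∃ h ∈ H, (∀ x ∈ B', h x = h₀ x) ∧ ∀ x ∈ C, x ∉ B' → h x = h₁ x

open Set

section Natarajan

variable {A Y : Type*}

lemma Finset.restrict_eq_restrict_iff {s : Finset A} {f g : A → Y} :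
    s.restrict f = s.restrict g ↔ EqOn f g s := by
  simp [funext_iff, EqOn]

lemma NShatters.mono {H H' : Set (A → Y)} {C : Finset A} (h : NShatters H C) (hH : H ⊆ H') :
    NShatters H' C := by
  obtain ⟨h₀, h₁, hne, hreal⟩ := h
  refine ⟨h₀, h₁, hne, fun B hB => ?_⟩
  obtain ⟨g, hg, hgB⟩ := hreal B hB
  exact ⟨g, hH hg, hgB⟩

lemma NShatters.empty {H : Set (A → Y)} (hH : H.Nonempty) : NShatters H ∅ := by
  obtain ⟨g, hg⟩ := hH
  exact ⟨g, g, by simp, fun _ _ => ⟨g, hg, fun _ _ => rfl, fun _ _ _ => rfl⟩⟩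

lemma NShatters.bShatters {H : Set (A → Bool)} {C : Finset A} (h : NShatters H C) :
    BShatters H C := by
  classical
  obtain ⟨h₀, h₁, hne, hreal⟩ := h
  intro b
  obtain ⟨g, hg, hg₀, hg₁⟩ := hreal (C.filter fun a => b a = h₀ a) (Finset.filter_subset _ _)
  refine ⟨g, hg, fun a ha => ?_⟩
  by_cases hb : b a = h₀ a
  · rw [hg₀ a (Finset.mem_filter.2 ⟨ha, hb⟩), hb]
  · rw [hg₁ a ha (fun h => hb (Finset.mem_filter.1 h).2)]
    have := hne a ha
    revert hb this
    cases b a <;> cases h₀ a <;> cases h₁ a <;> simp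

lemma BShatters.ncard_restrict_image {H : Set (A → Bool)} {C : Finset A} (h : BShatters H C) :
    (C.restrict '' H).ncard = 2 ^ C.card := by
  classical
  have himage : C.restrict '' H = univ := eq_univ_of_forall fun b => by
    obtain ⟨g, hg, hgb⟩ := h fun a => if ha : a ∈ C then b ⟨a, ha⟩ else false
    exact ⟨g, hg, funext fun a => by simpa using hgb a a.2⟩
  rw [himage, ncard_univ, Nat.card_fun]
  simp

def pairClass (H : Set (A → Y)) (x : A) (C : Finset A) (p : Y × Y) : Set (A → Y) :=
  {g ∈ H | g x = p.2 ∧ ∃ g' ∈ H, g' x = p.1 ∧ EqOn g' g C}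

lemma pairClass_subset (H : Set (A → Y)) (x : A) (C : Finset A) (p : Y × Y) :
    pairClass H x C p ⊆ H :=
  fun _ hg => hg.1

variable [DecidableEq A] {x : A} {C : Finset A}

lemma NShatters.insert_of_pairClass {H : Set (A → Y)} {B : Finset A} {p : Y × Y}
    (hx : x ∉ B) (hBC : B ⊆ C) (hp : p.1 ≠ p.2) (hs : NShatters (pairClass H x C p) B) :
    NShatters H (insert x B) := by
  obtain ⟨h₀, h₁, hne, hreal⟩ := hs
  refine ⟨Function.update h₀ x p.1, Function.update h₁ x p.2, fun a ha => ?_, fun B' hB' => ?_⟩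
  · rcases Finset.mem_insert.1 ha with rfl | ha
    · simpa using hp
    · simpa [ne_of_mem_of_not_mem ha hx] using hne a ha
  obtain ⟨g, ⟨hgH, hgx, g', hg'H, hg'x, hg'g⟩, hg₀, hg₁⟩ :=
    hreal (B'.erase x) (Finset.subset_insert_iff.1 hB')
  have hmemB : ∀ a ∈ insert x B, a ≠ x → a ∈ B := fun a ha hax =>
    (Finset.mem_insert.1 ha).resolve_left hax
  have hg₁' : ∀ a ∈ B, a ∉ B' → g a = h₁ a := fun a ha haB' =>
    hg₁ a ha fun h => haB' (Finset.mem_of_mem_erase h)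
  by_cases hxB' : x ∈ B'
  · refine ⟨g', hg'H, fun a ha => ?_, fun a ha haB' => ?_⟩
    · by_cases hax : a = x
      · subst hax; simpa using hg'x
      have ha' : a ∈ B'.erase x := Finset.mem_erase.2 ⟨hax, ha⟩
      rw [Function.update_of_ne hax, hg'g (hBC (Finset.subset_insert_iff.1 hB' ha')), hg₀ a ha']
    · have hax : a ≠ x := fun h => haB' (h ▸ hxB')
      rw [Function.update_of_ne hax, hg'g (hBC (hmemB a ha hax)), hg₁' a (hmemB a ha hax) haB']
  · refine ⟨g, hgH, fun a ha => ?_, fun a ha haB' => ?_⟩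
    · have hax : a ≠ x := fun h => hxB' (h ▸ ha)
      rw [Function.update_of_ne hax, hg₀ a (Finset.mem_erase.2 ⟨hax, ha⟩)]
    · by_cases hax : a = x
      · subst hax; simpa using hgx
      rw [Function.update_of_ne hax, hg₁' a (hmemB a ha hax) haB']

lemma card_lt_of_nShatters_pairClass {H : Set (A → Y)} {d : ℕ} (hx : x ∉ C)
    (hd : ∀ B ⊆ insert x C, NShatters H B → B.card ≤ d) {p : Y × Y} (hp : p.1 ≠ p.2)
    {B : Finset A} (hB : B ⊆ C) (hs : NShatters (pairClass H x C p) B) : B.card < d := by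
  have hxB : x ∉ B := fun h => hx (hB h)
  simpa [Finset.card_insert_of_notMem hxB] using
    hd _ (Finset.insert_subset_insert x hB) (hs.insert_of_pairClass hxB hB hp)

lemma injOn_restrict_pairClass {H : Set (A → Y)} (hH : InjOn (insert x C).restrict H)
    (p : Y × Y) : InjOn C.restrict (pairClass H x C p) := by
  intro g hg g' hg' hgg'
  refine hH hg.1 hg'.1 ?_
  rw [Finset.restrict_eq_restrict_iff] at hgg' ⊢
  simpa [EqOn, hg.2.1, hg'.2.1] using hgg'

lemma subset_union_pairClass [Fintype Y] {H T : Set (A → Y)} (hTH : T ⊆ H)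
    (hT : BijOn C.restrict T (C.restrict '' H)) (hH : InjOn (insert x C).restrict H) :
    H ⊆ T ∪ ⋃ p ∈ (Finset.univ : Finset Y).offDiag, pairClass H x C p := by
  intro g hg
  by_cases hgT : g ∈ T
  · exact Or.inl hgT
  obtain ⟨g', hg', hg'g⟩ := hT.surjOn ⟨g, hg, rfl⟩
  rw [Finset.restrict_eq_restrict_iff] at hg'g
  have hne : g' x ≠ g x := fun h => hgT <|
    (hH (hTH hg') hg <| Finset.restrict_eq_restrict_iff.2 <| by simpa [EqOn, h] using hg'g) ▸ hg'
  exact Or.inr <| mem_biUnion (x := (g' x, g x)) (by simpa using hne)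
    ⟨hg, rfl, g', hTH hg', rfl, hg'g⟩

/-- Natarajan's lemma. In the induction step `T` splits into representatives of its restrictions
to `C` and the classes `pairClass T x C p`, whose Natarajan dimension on `C` is one less than
that of `T` on `insert x C`. -/
theorem ncard_le_of_injOn_restrict [Fintype Y] {K : ℕ}
    (hK : (Finset.univ : Finset Y).offDiag.card ≤ K) (hK₀ : 1 ≤ K) (C : Finset A) :
    ∀ (d : ℕ) (T : Set (A → Y)), InjOn C.restrict T →
      (∀ B ⊆ C, NShatters T B → B.card ≤ d) → T.ncard ≤ (C.card + 1) ^ d * K ^ d := by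
  induction C using Finset.induction_on with
  | empty =>
    intro d T hT _
    have hT₁ : T.ncard ≤ 1 := (ncard_le_one (Finite.of_finite_image (toFinite _) hT)).2
      fun g hg g' hg' => hT hg hg' (Finset.restrict_eq_restrict_iff.2 (by simp))
    simpa using hT₁.trans (Nat.one_le_pow _ _ hK₀)
  | insert x C hx ih =>
    intro d T hT hd
    obtain ⟨T₁, hT₁T, hT₁⟩ := exists_subset_bijOn T C.restrict
    have hpair : ∀ p ∈ (Finset.univ : Finset Y).offDiag, ∀ B ⊆ C,
        NShatters (pairClass T x C p) B → B.card < d := fun p hp B hB =>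
      card_lt_of_nShatters_pairClass hx hd (Finset.mem_offDiag.1 hp).2.2 hB
    have hsplit : T.ncard ≤
        T₁.ncard + ∑ p ∈ (Finset.univ : Finset Y).offDiag, (pairClass T x C p).ncard :=
      (ncard_le_ncard (subset_union_pairClass hT₁T hT₁ hT)
        ((Finite.of_finite_image (toFinite _) hT).subset
          (union_subset hT₁T (iUnion₂_subset fun p _ => pairClass_subset T x C p)))).trans <|
        (ncard_union_le _ _).trans (Nat.add_le_add_left (Finset.set_ncard_biUnion_le _ _) _)
    have hT₁card : T₁.ncard ≤ (C.card + 1) ^ d * K ^ d :=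
      ih d T₁ hT₁.injOn fun B hB hs => hd B (hB.trans (Finset.subset_insert _ _)) (hs.mono hT₁T)
    rw [Finset.card_insert_of_notMem hx]
    cases d with
    | zero =>
      have hempty : ∀ p ∈ (Finset.univ : Finset Y).offDiag, (pairClass T x C p).ncard = 0 := by
        intro p hp
        rw [ncard_eq_zero (Finite.of_finite_image (toFinite _) (injOn_restrict_pairClass hT p)),
          ← not_nonempty_iff_eq_empty]
        exact fun hne => absurd (hpair p hp ∅ (Finset.empty_subset _) (NShatters.empty hne)) (by simp)
      simp only [Finset.sum_eq_zero hempty] at hsplit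
      simpa using hsplit.trans (by simpa using hT₁card)
    | succ e =>
      have hpaircard : ∑ p ∈ (Finset.univ : Finset Y).offDiag, (pairClass T x C p).ncard ≤
          K * ((C.card + 1) ^ e * K ^ e) :=
        (Finset.sum_le_card_nsmul _ _ _ fun p hp => ih e _ (injOn_restrict_pairClass hT p)
          fun B hB hs => Nat.le_of_lt_succ (hpair p hp B hB hs)).trans
          (by rw [smul_eq_mul]; gcongr)
      calc T.ncard ≤ (C.card + 1) ^ (e + 1) * K ^ (e + 1) + K * ((C.card + 1) ^ e * K ^ e) :=
            hsplit.trans (add_le_add hT₁card hpaircard)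
        _ = (C.card + 1) ^ e * (C.card + 1 + 1) * K ^ (e + 1) := by ring
        _ ≤ (C.card + 1 + 1) ^ (e + 1) * K ^ (e + 1) := by
            rw [pow_succ]
            exact Nat.mul_le_mul_right _ (Nat.mul_le_mul_right _ (Nat.pow_le_pow_left (by omega) e))

theorem ncard_restrict_image_le [Fintype Y] {K : ℕ}
    (hK : (Finset.univ : Finset Y).offDiag.card ≤ K) (hK₀ : 1 ≤ K) (F : Set (A → Y))
    (C : Finset A) {d : ℕ} (hd : ∀ B ⊆ C, NShatters F B → B.card ≤ d) :
    (C.restrict '' F).ncard ≤ (C.card + 1) ^ d * K ^ d := by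
  obtain ⟨T, hTF, hT⟩ := exists_subset_bijOn F C.restrict
  rw [← hT.image_eq, hT.injOn.ncard_image]
  exact ncard_le_of_injOn_restrict hK hK₀ C d T hT.injOn fun B hB hs => hd B hB (hs.mono hTF)

end Natarajan

section Composition

variable {A A' B : Type*}

lemma ncard_restrict_image_comp_le [DecidableEq A'] [Finite B] (C : Finset A) (φ : A → A')
    (H : Set (A' → B)) :
    (C.restrict '' ((· ∘ φ) '' H)).ncard ≤ ((C.image φ).restrict '' H).ncard := by
  have hfactor : C.restrict '' ((· ∘ φ) '' H) =
      (fun w (a : C) => w ⟨φ a, Finset.mem_image_of_mem φ a.2⟩) '' ((C.image φ).restrict '' H) := by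
    simp only [image_image]
    rfl
  rw [hfactor]
  exact ncard_image_le (toFinite _)

lemma restrict_image_comp_congr {φ ψ : A → A'} (H : Set (A' → B)) {C : Finset A}
    (h : EqOn φ ψ C) : C.restrict '' ((· ∘ φ) '' H) = C.restrict '' ((· ∘ ψ) '' H) := by
  simp only [image_image]
  exact image_congr fun g _ => funext fun a => congrArg g (h a.2)

end Composition

lemma ncard_biUnion_le_of_factor {ι γ β : Type*} {F : Set ι} (π : ι → γ) (S : ι → Set β)
    (hS : ∀ i ∈ F, ∀ j ∈ F, π i = π j → S i = S j) (hπ : (π '' F).Finite) {m : ℕ}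
    (hm : ∀ i ∈ F, (S i).ncard ≤ m) :
    (⋃ i ∈ F, S i).ncard ≤ (π '' F).ncard * m := by
  obtain ⟨F', hF'F, hF'⟩ := exists_subset_bijOn F π
  have hF'fin : F'.Finite := Finite.of_finite_image (hF'.image_eq ▸ hπ) hF'.injOn
  have hunion : ⋃ i ∈ F, S i = ⋃ i ∈ hF'fin.toFinset, S i := by
    refine subset_antisymm (iUnion₂_subset fun i hi => ?_)
      (iUnion₂_subset fun i hi => subset_biUnion_of_mem (u := S) (hF'F (by simpa using hi)))
    obtain ⟨j, hj, hji⟩ := hF'.surjOn ⟨i, hi, rfl⟩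
    rw [hS i hi j (hF'F hj) hji.symm]
    exact subset_biUnion_of_mem (u := S) (by simpa using hj)
  rw [hunion, ← hF'.image_eq, hF'.injOn.ncard_image, ncard_eq_toFinset_card _ hF'fin]
  exact (Finset.set_ncard_biUnion_le _ _).trans
    (Finset.sum_le_card_nsmul _ _ _ fun i hi => hm i (hF'F (by simpa using hi)))

theorem two_pow_card_le_of_bShatters {X Y S : Type*} [Fintype Y] [Nonempty Y] [DecidableEq S]
    {M dF dG : ℕ} {F : Set (X → Y)} {G : Set ((Fin M → Y) → S)}
    (hdF : ∀ C : Finset X, NShatters F C → C.card ≤ dF)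
    (hdG : ∀ C : Finset ((Fin M → Y) × S),
      BShatters {h | ∃ σ' ∈ G, h = fun p => decide (σ' p.1 ≠ p.2)} C → C.card ≤ dG)
    {C : Finset ((Fin M → X) × S)}
    (hC : BShatters {h | ∃ f ∈ F, ∃ σ' ∈ G,
      h = fun p => decide (σ' (fun i => f (p.1 i)) ≠ p.2)} C) :
    2 ^ C.card ≤
      (M * C.card + 1) ^ dF * (Fintype.card Y ^ 2) ^ dF * ((C.card + 1) ^ dG * 2 ^ dG) := by
  classical
  set Gcl : Set ((Fin M → Y) × S → Bool) := {h | ∃ σ' ∈ G, h = fun p => decide (σ' p.1 ≠ p.2)}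
  let Φ : (X → Y) → (Fin M → X) × S → (Fin M → Y) × S := fun f => Prod.map (f ∘ ·) id
  have hH : {h | ∃ f ∈ F, ∃ σ' ∈ G, h = fun p => decide (σ' (fun i => f (p.1 i)) ≠ p.2)} =
      ⋃ f ∈ F, (· ∘ Φ f) '' Gcl := by
    ext h
    simp [Gcl, Φ, Function.comp_def, eq_comm]
  set P : Finset X := C.biUnion fun p => Finset.univ.image p.1
  have hP : P.card ≤ M * C.card := by
    simpa [mul_comm] using Finset.card_biUnion_le_card_mul C _ M fun p _ =>
      Finset.card_image_le.trans (by simp)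
  have hΦ : ∀ f f', P.restrict f = P.restrict f' → EqOn (Φ f) (Φ f') C := by
    intro f f' h p hp
    simp only [Φ, Prod.map, Function.comp_def]
    congr 1
    exact funext fun i => Finset.restrict_eq_restrict_iff.1 h
      (Finset.mem_biUnion.2 ⟨p, hp, Finset.mem_image_of_mem _ (Finset.mem_univ i)⟩)
  have hYpairs : (Finset.univ : Finset Y).offDiag.card ≤ Fintype.card Y ^ 2 := by
    simp [sq]
  rw [← hC.ncard_restrict_image, hH, image_iUnion₂]
  calc _ ≤ (P.restrict '' F).ncard * ((C.card + 1) ^ dG * 2 ^ dG) :=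
        ncard_biUnion_le_of_factor P.restrict _
          (fun f _ f' _ h => restrict_image_comp_congr Gcl (hΦ f f' h)) (toFinite _)
          fun f _ => (ncard_restrict_image_comp_le C (Φ f) Gcl).trans <|
            (ncard_restrict_image_le (K := 2) (by decide) one_le_two Gcl _
              fun B _ hs => hdG B hs.bShatters).trans <| by
                gcongr; exact Finset.card_image_le
    _ ≤ _ := by
        gcongr
        exact (ncard_restrict_image_le hYpairs (Nat.one_le_pow _ _ Fintype.card_pos) F P
          fun B _ => hdF B).trans (by gcongr)

open Real in
lemma Real.log_le_div_add_log_sub_one {t s : ℝ} (ht : 0 < t) (hs : 0 < s) :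
    log t ≤ t / s + log s - 1 := by
  have := log_le_sub_one_of_pos (div_pos ht hs)
  rw [log_div ht.ne' hs.ne'] at this
  linarith

open Real in
lemma le_two_mul_log_of_two_pow_le {n M c a b : ℕ} (hM : 1 ≤ M) (hc : 1 ≤ c)
    (h : 2 ^ n ≤ (M * n + 1) ^ a * (c ^ 2) ^ a * ((n + 1) ^ b * 2 ^ b)) :
    (n : ℝ) ≤ 2 * ((a + b) * log (6 * M * (a + b)) + 2 * a * log c) := by
  rcases Nat.eq_zero_or_pos (a + b) with hk | hk
  · obtain ⟨rfl, rfl⟩ : a = 0 ∧ b = 0 := by omega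
    have : n < 2 ^ n := Nat.lt_two_pow_self
    simp only [pow_zero, mul_one] at h
    norm_num
    omega
  set k : ℝ := a + b with hk_def
  have hk1 : (1 : ℝ) ≤ k := by rw [hk_def]; exact_mod_cast hk
  have hM1 : (1 : ℝ) ≤ M := by exact_mod_cast hM
  have hlogM : 0 ≤ log M := log_nonneg hM1
  have hlogc : 0 ≤ log c := log_nonneg (by exact_mod_cast hc)
  have hlog2 := log_two_gt_d9
  have hlog2' := log_two_lt_d9
  have hn : (0 : ℝ) ≤ n := n.cast_nonneg
  have hcount : n * log 2 ≤
      a * log (M * n + 1) + a * (2 * log c) + (b * log (n + 1) + b * log 2) := by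
    have h' : (2 : ℝ) ^ n ≤ (M * n + 1) ^ a * (c ^ 2) ^ a * ((n + 1) ^ b * 2 ^ b) := by
      exact_mod_cast h
    have := log_le_log (by positivity) h'
    rw [log_pow, log_mul (by positivity) (by positivity), log_mul (by positivity) (by positivity),
      log_mul (by positivity) (by positivity), log_pow, log_pow, log_pow, log_pow, log_pow] at this
    simpa using this
  have hMn : log (M * n + 1) ≤ log M + log (n + 1) := by
    rw [← log_mul (by positivity) (by positivity)]
    exact log_le_log (by positivity) (by nlinarith)
  have hsplit : log (6 * M * k) = log M + log (6 * k) := by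
    rw [show (6 : ℝ) * M * k = M * (6 * k) by ring, log_mul (by positivity) (by positivity)]
  have ha : (a : ℝ) * (log M + log (n + 1)) ≤ k * log M + a * log (n + 1) := by
    nlinarith [mul_nonneg (b.cast_nonneg : (0 : ℝ) ≤ b) hlogM]
  have hb : (b : ℝ) * log 2 ≤ k * log 2 := by
    nlinarith [mul_nonneg (a.cast_nonneg : (0 : ℝ) ≤ a) (log_nonneg one_le_two)]
  have hk' : k * log (n + 1) ≤ (n + 1) / 6 + k * log (6 * k) - k := by
    have hdiv : k * ((n + 1) / (6 * k)) = (n + 1) / 6 := by field_simp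
    nlinarith [mul_le_mul_of_nonneg_left
      (log_le_div_add_log_sub_one (t := n + 1) (s := 6 * k) (by positivity) (by positivity))
      (by linarith : (0 : ℝ) ≤ k)]
  have hmain : n * (log 2 - 1 / 6) ≤ k * log (6 * M * k) + 2 * a * log c := by
    have hkl : k * (log 2 - 1) ≤ log 2 - 1 := by nlinarith
    nlinarith [mul_le_mul_of_nonneg_left hMn (a.cast_nonneg : (0 : ℝ) ≤ a)]
  nlinarith

/-- VC dimension bound for the class `{(x,s) ↦ 1{σ'(f(x₁),…,f(x_M)) ≠ s}}`
induced by a Natarajan class `F` of classifiers and a transition class `G`. -/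
theorem stmt10 {X Y S : Type*} [Fintype Y] [DecidableEq S]
    (c M : ℕ) (hc : Fintype.card Y = c) (hM : 1 ≤ M)
    (F : Set (X → Y)) (G : Set ((Fin M → Y) → S))
    (dF dG : ℕ)
    (hdF : ∀ C : Finset X, NShatters F C → C.card ≤ dF)
    (hdG : ∀ C : Finset ((Fin M → Y) × S),
      BShatters {h | ∃ σ' ∈ G, h = fun p => decide (σ' p.1 ≠ p.2)} C → C.card ≤ dG) :
    ∀ C : Finset ((Fin M → X) × S),
      BShatters {h | ∃ f ∈ F, ∃ σ' ∈ G,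
          h = fun p => decide (σ' (fun i => f (p.1 i)) ≠ p.2)} C →
        (C.card : ℝ)
          ≤ 2 * ((dF + dG) * Real.log (6 * M * (dF + dG)) + 2 * dF * Real.log c) := by
  intro C hC
  obtain rfl | ⟨p₀, -⟩ := C.eq_empty_or_nonempty
  · have hlog₁ := Real.log_natCast_nonneg (6 * M * (dF + dG))
    have hlog₂ := Real.log_natCast_nonneg c
    push_cast at hlog₁
    have := mul_nonneg (by positivity : (0 : ℝ) ≤ dF + dG) hlog₁
    have := mul_nonneg (by positivity : (0 : ℝ) ≤ 2 * dF) hlog₂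
    simp only [Finset.card_empty, Nat.cast_zero]
    linarith
  obtain ⟨-, ⟨f₀, -⟩, -⟩ := hC fun _ => true
  have : Nonempty Y := ⟨f₀ (p₀.1 ⟨0, hM⟩)⟩
  subst hc
  exact le_two_mul_log_of_two_pow_le hM Fintype.card_pos (two_pow_card_le_of_bShatters hdF hdG hC)
end

section
/- Let [F_1],...,[F_n] be multiclass classifier classes with Natarajan dimensions d_i < ∞ over label spaces of sizes c_i, and let each f_i classify M_i instances. The binary class H = {(x,s) ↦ 1{σ((f_1(x_1),...,f_n(x_n))) ≠ s} : f_i ∈ [F_i]} has VC dimension at most 4 Σ_{i=1}^n (d_i log(M_i · n · d_i) + 2 d_i log c_i). -/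
open Finset Real

section Natarajan

variable {A B : Type*}

noncomputable def restrictions [Finite B] (F : Set (A → B)) (C : Finset A) : Finset (C → B) :=
  (Set.toFinite ((fun f (z : C) => f z) '' F)).toFinset

lemma mem_restrictions [Finite B] {F : Set (A → B)} {C : Finset A} {r : C → B} :
    r ∈ restrictions F C ↔ ∃ f ∈ F, (fun z : C => f z) = r := by
  simp [restrictions]

lemma nShatters_singleton {F : Set (A → B)} {f g : A → B} (hf : f ∈ F) (hg : g ∈ F) {x : A}
    (hfg : f x ≠ g x) : NShatters F {x} := by
  refine ⟨f, g, by simpa using hfg, fun D hD => ?_⟩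
  rcases subset_singleton_iff.mp hD with rfl | rfl
  · exact ⟨g, hg, by simp, fun _ _ _ => rfl⟩
  · exact ⟨f, hf, fun _ _ => rfl, by simp⟩

lemma card_restrictions_le_one [Finite B] {F : Set (A → B)} {C : Finset A}
    (hC : ∀ x ∈ C, ¬ NShatters F {x}) : #(restrictions F C) ≤ 1 := by
  refine card_le_one.mpr fun r₁ h₁ r₂ h₂ => funext fun z => ?_
  obtain ⟨f₁, hf₁, rfl⟩ := mem_restrictions.mp h₁
  obtain ⟨f₂, hf₂, rfl⟩ := mem_restrictions.mp h₂
  by_contra hne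
  exact hC z z.2 (nShatters_singleton hf₁ hf₂ hne)

def twinClass (F : Set (A → B)) (C : Finset A) (x : A) (y y' : B) : Set (A → B) :=
  {f | f ∈ F ∧ f x = y ∧ ∃ g ∈ F, g x = y' ∧ ∀ a ∈ C, g a = f a}

lemma NShatters.insert_of_twinClass [DecidableEq A] {F : Set (A → B)} {C D : Finset A}
    {x : A} {y y' : B} (hyy' : y ≠ y') (hDC : D ⊆ C) (hxD : x ∉ D)
    (hD : NShatters (twinClass F C x y y') D) : NShatters F (insert x D) := by
  obtain ⟨h₀, h₁, hne, hsh⟩ := hD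
  have hx : ∀ a ∈ D, a ≠ x := fun a ha hax => hxD (hax ▸ ha)
  refine ⟨Function.update h₀ x y, Function.update h₁ x y', ?_, fun B' hB' => ?_⟩
  · simp only [mem_insert, forall_eq_or_imp, Function.update_self]
    exact ⟨hyy', fun a ha => by simpa [hx a ha] using hne a ha⟩
  by_cases hxB' : x ∈ B'
  · obtain ⟨f, ⟨hfF, hfx, -⟩, hf₀, hf₁⟩ := hsh (B'.erase x) fun a ha => by
      obtain ⟨hax, haB'⟩ := mem_erase.mp ha
      simpa [hax] using hB' haB'
    refine ⟨f, hfF, fun a ha => ?_, fun a ha haB' => ?_⟩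
    · rcases eq_or_ne a x with rfl | hax
      · simpa using hfx
      · simpa [hax] using hf₀ a (mem_erase.mpr ⟨hax, ha⟩)
    · have hax : a ≠ x := by rintro rfl; exact haB' hxB'
      have haD : a ∈ D := by simpa [hax] using ha
      simpa [hax] using hf₁ a haD fun h => haB' (mem_of_mem_erase h)
  · have hB'D : B' ⊆ D := fun a ha => by
      have hax : a ≠ x := by rintro rfl; exact hxB' ha
      simpa [hax] using hB' ha
    obtain ⟨f, ⟨-, -, g, hgF, hgx, hgf⟩, hf₀, hf₁⟩ := hsh B' hB'D
    refine ⟨g, hgF, fun a ha => ?_, fun a ha haB' => ?_⟩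
    · have haD := hB'D ha
      simpa [hx a haD, hgf a (hDC haD)] using hf₀ a ha
    · rcases mem_insert.mp ha with rfl | haD
      · simpa using hgx
      · simpa [hx a haD, hgf a (hDC haD)] using hf₁ a haD haB'

lemma card_restrictions_insert_le [DecidableEq A] [Fintype B] [Nonempty B] (F : Set (A → B))
    (C : Finset A) (x : A) :
    #(restrictions F (insert x C)) ≤ #(restrictions F C)
      + ∑ p ∈ (univ : Finset B).offDiag, #(restrictions (twinClass F C x p.1 p.2) C) := by
  classical
  let ρ : (↥(insert x C) → B) → (C → B) := fun r z => r ⟨z.1, mem_insert_of_mem z.2⟩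
  let xC : ↥(insert x C) := ⟨x, mem_insert_self x C⟩
  have hρ : ∀ r₁ r₂, ρ r₁ = ρ r₂ → r₁ xC = r₂ xC → r₁ = r₂ := by
    intro r₁ r₂ hρ hxC
    funext ⟨a, ha⟩
    rcases mem_insert.mp ha with rfl | ha
    · exact hxC
    · exact congrFun hρ ⟨a, ha⟩
  let v : (C → B) → B := fun s =>
    if h : ∃ f ∈ F, (fun z : C => f z) = s then h.choose x else Classical.arbitrary B
  have hv : ∀ s ∈ restrictions F C, ∃ f ∈ F, (fun z : C => f z) = s ∧ f x = v s := by
    intro s hs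
    have h := mem_restrictions.mp hs
    exact ⟨h.choose, h.choose_spec.1, h.choose_spec.2, by simp [v, h]⟩
  have hρF : ∀ r ∈ restrictions F (insert x C), ρ r ∈ restrictions F C := by
    intro r hr
    obtain ⟨f, hf, rfl⟩ := mem_restrictions.mp hr
    exact mem_restrictions.mpr ⟨f, hf, rfl⟩
  set R := restrictions F (insert x C)
  calc #R = #(R.filter fun r => r xC = v (ρ r)) + #(R.filter fun r => ¬ r xC = v (ρ r)) :=
        (card_filter_add_card_filter_not _).symm
    _ ≤ #(restrictions F C) + #((univ : Finset B).offDiag.sigma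
          fun p => restrictions (twinClass F C x p.1 p.2) C) := by
        gcongr
        · refine card_le_card_of_injOn ρ (fun r hr => hρF r (mem_filter.mp hr).1) ?_
          intro r₁ h₁ r₂ h₂ h
          exact hρ r₁ r₂ h (by rw [(mem_filter.mp h₁).2, (mem_filter.mp h₂).2, h])
        · refine card_le_card_of_injOn (fun r => ⟨(v (ρ r), r xC), ρ r⟩) ?_ ?_
          · intro r hr
            obtain ⟨hrR, hrv⟩ := mem_filter.mp hr
            obtain ⟨g, hg, rfl⟩ := mem_restrictions.mp hrR
            obtain ⟨f, hf, hfg, hfx⟩ := hv _ (hρF _ hrR)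
            refine mem_sigma.mpr ⟨by simpa [eq_comm] using hrv, mem_restrictions.mpr ⟨f, ?_, hfg⟩⟩
            exact ⟨hf, hfx, g, hg, rfl, fun a ha => (congrFun hfg ⟨a, ha⟩).symm⟩
          · intro r₁ _ r₂ _ h
            simp only [Sigma.mk.injEq, Prod.mk.injEq] at h
            exact hρ r₁ r₂ (eq_of_heq h.2) h.1.2
    _ = _ := by rw [card_sigma]

lemma pow_succ_add_mul_pow_le (x a d : ℕ) : x ^ (d + 1) + a * x ^ d ≤ (x + a) ^ (d + 1) :=
  calc x ^ (d + 1) + a * x ^ d = x ^ d * (x + a) := by ring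
    _ ≤ (x + a) ^ d * (x + a) := by gcongr; exact Nat.le_add_right x a
    _ = (x + a) ^ (d + 1) := (pow_succ _ _).symm

/-- **Natarajan's lemma**; `|B| (|B| - 1)` counts the ordered pairs of distinct labels. -/
theorem card_restrictions_le_of_nShatters [Fintype B] (F : Set (A → B)) (C : Finset A) (d : ℕ)
    (hd : ∀ D ⊆ C, NShatters F D → #D ≤ d) :
    #(restrictions F C) ≤ (Fintype.card B * (Fintype.card B - 1) * #C + 1) ^ d := by
  classical
  induction C using Finset.induction_on generalizing F d with
  | empty => simpa using card_restrictions_le_one (F := F) (C := ∅) (by simp)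
  | insert x C hx ih =>
    rcases d with _ | d
    · refine (card_restrictions_le_one fun z hz hz' => ?_).trans (by simp)
      simpa using hd {z} (singleton_subset_iff.mpr hz) hz'
    rcases isEmpty_or_nonempty B with hB | hB
    · have : IsEmpty (↥(insert x C) → B) := ⟨fun r => isEmptyElim (r ⟨x, mem_insert_self x C⟩)⟩
      simp [eq_empty_of_isEmpty (restrictions F (insert x C))]
    set a := Fintype.card B * (Fintype.card B - 1)
    have ha : #(univ : Finset B).offDiag = a := by
      rw [offDiag_card, card_univ, ← Nat.mul_sub_one]
    have hC : ∀ D ⊆ C, NShatters F D → #D ≤ d + 1 := fun D hD => hd D (hD.trans (subset_insert x C))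
    have htwin : ∀ p ∈ (univ : Finset B).offDiag,
        ∀ D ⊆ C, NShatters (twinClass F C x p.1 p.2) D → #D ≤ d := by
      intro p hp D hDC hD
      have hxD : x ∉ D := fun h => hx (hDC h)
      have := hd _ (insert_subset_insert x hDC)
        (hD.insert_of_twinClass (mem_offDiag.mp hp).2.2 hDC hxD)
      rwa [card_insert_of_notMem hxD, add_le_add_iff_right] at this
    calc #(restrictions F (insert x C))
        ≤ #(restrictions F C)
          + ∑ p ∈ (univ : Finset B).offDiag, #(restrictions (twinClass F C x p.1 p.2) C) :=
          card_restrictions_insert_le F C x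
      _ ≤ (a * #C + 1) ^ (d + 1) + ∑ p ∈ (univ : Finset B).offDiag, (a * #C + 1) ^ d :=
          add_le_add (ih F (d + 1) hC) (sum_le_sum fun p hp => ih _ d (htwin p hp))
      _ = (a * #C + 1) ^ (d + 1) + a * (a * #C + 1) ^ d := by rw [sum_const, ha, smul_eq_mul]
      _ ≤ (a * #C + 1 + a) ^ (d + 1) := pow_succ_add_mul_pow_le _ _ _
      _ = (a * #(insert x C) + 1) ^ (d + 1) := by rw [card_insert_of_notMem hx]; ring

end Natarajan

section Composite

variable {ι : Type*} {J X Y : ι → Type*} {S : Type*}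

def compositeClass [DecidableEq S] (σ : (∀ i, J i → Y i) → S) (F : ∀ i, Set (X i → Y i)) :
    Set ((∀ i, J i → X i) × S → Bool) :=
  {h | ∃ f : ∀ i, X i → Y i, (∀ i, f i ∈ F i) ∧
    h = fun p => decide (σ (fun i j => f i (p.1 i j)) ≠ p.2)}

variable [∀ i, Fintype (J i)] [∀ i, DecidableEq (X i)]

def instancesAt (C : Finset ((∀ i, J i → X i) × S)) (i : ι) : Finset (X i) :=
  C.biUnion fun p => univ.image (p.1 i)

lemma mem_instancesAt {C : Finset ((∀ i, J i → X i) × S)} {p : (∀ i, J i → X i) × S}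
    (hp : p ∈ C) (i : ι) (j : J i) : p.1 i j ∈ instancesAt C i :=
  mem_biUnion.mpr ⟨p, hp, mem_image_of_mem _ (mem_univ j)⟩

lemma card_instancesAt_le (C : Finset ((∀ i, J i → X i) × S)) (i : ι) :
    #(instancesAt C i) ≤ Fintype.card (J i) * #C :=
  calc #(instancesAt C i) ≤ ∑ p ∈ C, #(univ.image (p.1 i)) := card_biUnion_le
    _ ≤ ∑ _p ∈ C, Fintype.card (J i) := sum_le_sum fun _ _ => card_image_le
    _ = Fintype.card (J i) * #C := by rw [sum_const, smul_eq_mul, mul_comm]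

lemma two_pow_card_le_prod_card_restrictions [Fintype ι] [DecidableEq S] [∀ i, Finite (Y i)]
    {σ : (∀ i, J i → Y i) → S} {F : ∀ i, Set (X i → Y i)} {C : Finset ((∀ i, J i → X i) × S)}
    (hC : BShatters (compositeClass σ F) C) :
    2 ^ #C ≤ ∏ i, #(restrictions (F i) (instancesAt C i)) := by
  classical
  let Φ : (∀ i, instancesAt C i → Y i) → (C → Bool) := fun r p =>
    decide (σ (fun i j => r i ⟨p.1.1 i j, mem_instancesAt p.2 i j⟩) ≠ p.1.2)
  have hΦ : univ ⊆ (Fintype.piFinset fun i => restrictions (F i) (instancesAt C i)).image Φ := by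
    intro b _
    obtain ⟨h, ⟨f, hf, rfl⟩, hfb⟩ := hC fun p => if hp : p ∈ C then b ⟨p, hp⟩ else false
    refine mem_image.mpr ⟨fun i z => f i z, ?_, funext fun p => ?_⟩
    · exact Fintype.mem_piFinset.mpr fun i => mem_restrictions.mpr ⟨f i, hf i, rfl⟩
    · exact (hfb p p.2).trans (dif_pos p.2)
  calc 2 ^ #C = #(univ : Finset (C → Bool)) := by simp
    _ ≤ #((Fintype.piFinset fun i => restrictions (F i) (instancesAt C i)).image Φ) :=
        card_le_card hΦ
    _ ≤ ∏ i, #(restrictions (F i) (instancesAt C i)) :=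
        card_image_le.trans (Fintype.card_piFinset _).le

lemma card_restrictions_instancesAt_le [Fintype ι] [∀ i, Fintype (Y i)]
    {F : ∀ i, Set (X i → Y i)} {d : ι → ℕ}
    (hd : ∀ i, ∀ D : Finset (X i), NShatters (F i) D → #D ≤ d i)
    (C : Finset ((∀ i, J i → X i) × S)) (i : ι) :
    #(restrictions (F i) (instancesAt C i))
      ≤ (Fintype.card (Y i) * (Fintype.card (Y i) - 1) * (Fintype.card (J i) * #C) + 1) ^ d i :=
  (card_restrictions_le_of_nShatters (F i) (instancesAt C i) (d i) fun D _ => hd i D).trans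
    (by gcongr; exact card_instancesAt_le C i)

end Composite

lemma log_le_log_add_div_exp_mul {x y : ℝ} (hx : 0 < x) (hy : 0 < y) :
    log x ≤ log y + x / (exp 1 * y) := by
  have h := log_le_sub_one_of_pos (div_pos hx (mul_pos (exp_pos 1) hy))
  rw [log_div hx.ne' (by positivity), log_mul (exp_pos 1).ne' hy.ne', log_exp] at h
  linarith

lemma mul_log_two_le_sum_log {ι : Type*} {s : Finset ι} {G : ι → ℕ} {m : ℕ}
    (h : 2 ^ m ≤ ∏ i ∈ s, G i) : m * log 2 ≤ ∑ i ∈ s, log (G i) := by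
  have hpos : 0 < ∏ i ∈ s, G i := (Nat.two_pow_pos m).trans_le h
  have hG : ∀ i ∈ s, (G i : ℝ) ≠ 0 := fun i hi =>
    Nat.cast_ne_zero.mpr (prod_ne_zero_iff.mp hpos.ne' i hi)
  calc m * log 2 = log ((2 : ℝ) ^ m) := by rw [log_pow]
    _ ≤ log (∏ i ∈ s, (G i : ℝ)) := log_le_log (by positivity) (by exact_mod_cast h)
    _ = ∑ i ∈ s, log (G i) := log_prod hG

lemma mul_log_add_two_mul_log_nonneg (M n d c : ℕ) :
    0 ≤ (d : ℝ) * log (M * n * d) + 2 * d * log c := by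
  have h := log_natCast_nonneg (M * n * d)
  have := log_natCast_nonneg c
  push_cast at h
  positivity

lemma two_le_and_pos_of_two_le_pow {c M m d : ℕ} (h : 2 ≤ (c * (c - 1) * (M * m) + 1) ^ d) :
    2 ≤ c ∧ 0 < M ∧ 0 < d := by
  have hd : d ≠ 0 := by rintro rfl; simp at h
  have hN : c * (c - 1) * (M * m) ≠ 0 := by intro h0; simp [h0] at h
  simp only [ne_eq, mul_eq_zero, not_or] at hN
  omega

lemma two_mul_log_two_le {G c M m d : ℕ} (n : ℕ) (hG : 2 ≤ G)
    (hG' : G ≤ (c * (c - 1) * (M * m) + 1) ^ d) :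
    2 * log 2 ≤ d * log (M * n * d) + 2 * d * log c := by
  obtain ⟨hc, -, hd⟩ := two_le_and_pos_of_two_le_pow (hG.trans hG')
  have hlog : log 2 ≤ log c := log_le_log two_pos (by exact_mod_cast hc)
  have hd : (1 : ℝ) ≤ d := by exact_mod_cast hd
  have := log_natCast_nonneg (M * n * d)
  push_cast at this
  nlinarith [log_pos one_lt_two]

lemma log_natCast_le_of_le_pow {G c M m d n : ℕ} (hn : 0 < n)
    (hG : G ≤ (c * (c - 1) * (M * m) + 1) ^ d) :
    log G ≤ d * log (M * n * d) + 2 * d * log c + (m + 1) / (exp 1 * n) := by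
  have hT := mul_log_add_two_mul_log_nonneg M n d c
  rcases lt_or_ge G 2 with hG2 | hG2
  · have : log G = 0 := by interval_cases G <;> simp
    rw [this]
    positivity
  obtain ⟨hc, hM, hd⟩ := two_le_and_pos_of_two_le_pow (hG2.trans hG)
  have hle : c * (c - 1) * (M * m) + 1 ≤ c ^ 2 * (M * (m + 1)) := by
    have hcc : c * (c - 1) ≤ c ^ 2 := by rw [sq]; exact Nat.mul_le_mul_left c (Nat.sub_le c 1)
    calc c * (c - 1) * (M * m) + 1 ≤ c ^ 2 * (M * m) + c ^ 2 * M := by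
          gcongr; exact Nat.one_le_iff_ne_zero.mpr (by positivity)
      _ = c ^ 2 * (M * (m + 1)) := by ring
  have hG' : (G : ℝ) ≤ ((c : ℝ) ^ 2 * (M * (m + 1))) ^ d := by
    exact_mod_cast hG.trans (Nat.pow_le_pow_left hle d)
  have hMm : (0 : ℝ) < M * (m + 1) := by positivity
  calc log G ≤ d * (2 * log c + log (M * (m + 1))) := by
        have h := log_le_log (by positivity) hG'
        rwa [log_pow, log_mul (by positivity) hMm.ne', log_pow] at h
    _ ≤ d * (2 * log c + (log (M * n * d) + M * (m + 1) / (exp 1 * (M * n * d)))) := by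
        gcongr
        exact log_le_log_add_div_exp_mul hMm (by positivity)
    _ = d * log (M * n * d) + 2 * d * log c + (m + 1) / (exp 1 * n) := by
        field_simp
        ring

lemma le_four_mul_of_mul_log_two_le {m S : ℝ} (hm : m * log 2 ≤ S + (m + 1) / exp 1)
    (hS : 2 * log 2 ≤ S) : m ≤ 4 * S := by
  have hlog := log_two_gt_d9
  have hexp : (exp 1)⁻¹ < 0.36788 := by
    rw [inv_lt_comm₀ (exp_pos 1) (by norm_num)]
    linarith [exp_one_gt_d9]
  rw [div_eq_mul_inv] at hm
  nlinarith [inv_pos.mpr (exp_pos 1)]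

lemma le_four_mul_sum_of_two_pow_le_prod {n m : ℕ} {G c M d : Fin n → ℕ}
    (hG : ∀ i, G i ≤ (c i * (c i - 1) * (M i * m) + 1) ^ d i) (h : 2 ^ m ≤ ∏ i, G i) :
    (m : ℝ) ≤ 4 * ∑ i, ((d i : ℝ) * log (M i * n * d i) + 2 * d i * log (c i)) := by
  have hT : ∀ i, 0 ≤ (d i : ℝ) * log (M i * n * d i) + 2 * d i * log (c i) :=
    fun i => mul_log_add_two_mul_log_nonneg _ _ _ _
  rcases m.eq_zero_or_pos with rfl | hm
  · simpa using sum_nonneg fun i _ => hT i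
  obtain ⟨i₀, hi₀⟩ : ∃ i, 2 ≤ G i := by
    by_contra! hG1
    have := h.trans (prod_le_one' fun i _ => Nat.le_of_lt_succ (hG1 i))
    exact (Nat.one_lt_two_pow hm.ne').not_ge this
  have hn : (n : ℝ) ≠ 0 := Nat.cast_ne_zero.mpr i₀.pos.ne'
  refine le_four_mul_of_mul_log_two_le ?_
    ((two_mul_log_two_le n hi₀ (hG i₀)).trans (single_le_sum (fun i _ => hT i) (mem_univ i₀)))
  calc (m : ℝ) * log 2 ≤ ∑ i, log (G i) := mul_log_two_le_sum_log h
    _ ≤ ∑ i, ((d i : ℝ) * log (M i * n * d i) + 2 * d i * log (c i) + (m + 1) / (exp 1 * n)) :=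
        sum_le_sum fun i _ => log_natCast_le_of_le_pow i₀.pos (hG i)
    _ = ∑ i, ((d i : ℝ) * log (M i * n * d i) + 2 * d i * log (c i)) + (m + 1) / exp 1 := by
        rw [sum_add_distrib, sum_const, card_univ, Fintype.card_fin, nsmul_eq_mul]
        congr 1
        field_simp

/-- VC dimension bound for the binary class induced by `n` multiclass classifier
classes `F i` (with Natarajan dimension `≤ d i`, label spaces of size `c i`,
`M i` instances each) composed with a fixed transition `σ`. -/
theorem stmt11 {n : ℕ} {X Y : Fin n → Type*} {S : Type*} [DecidableEq S]
    [∀ i, Fintype (Y i)]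
    (Mi : Fin n → ℕ) (c : Fin n → ℕ) (hc : ∀ i, Fintype.card (Y i) = c i)
    (σ : (∀ i, Fin (Mi i) → Y i) → S)
    (F : ∀ i, Set (X i → Y i)) (d : Fin n → ℕ)
    (hd : ∀ i, ∀ C : Finset (X i), NShatters (F i) C → C.card ≤ d i) :
    ∀ C : Finset ((∀ i, Fin (Mi i) → X i) × S),
      BShatters {h | ∃ f : ∀ i, X i → Y i, (∀ i, f i ∈ F i) ∧
          h = fun p => decide (σ (fun i j => f i (p.1 i j)) ≠ p.2)} C →
        (C.card : ℝ)
          ≤ 4 * ∑ i, ((d i : ℝ) * Real.log (Mi i * n * d i)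
              + 2 * (d i : ℝ) * Real.log (c i)) := by
  classical
  intro C hC
  refine le_four_mul_sum_of_two_pow_le_prod (G := fun i => #(restrictions (F i) (instancesAt C i)))
    (fun i => ?_) (two_pow_card_le_prod_card_restrictions hC)
  simpa [hc] using card_restrictions_instancesAt_le hd C i
end

section
/- Consider the generalized multi-instance PLL setting where σ : Y^M → 2^{Y^M} is a random set-valued function containing the gold vector, with M-ambiguity degree γ = sup over (x,y) in the support of D^M and distinct diagonal vectors y' ≠ y of P(y' ∈ s) . If γ < 1, then for any classifier f: R^{01}(f) ≤ (c^{2M−2} · R^{01}_P(f;σ))^{1/M} / (1 − γ). -/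
open scoped ENNReal

attribute [local instance] Classical.propDecidable

/-!
Split the misclassified mass according to the pair (true label, predicted label) = (l, l'),
l ≠ l'. By the power-mean inequality over the at most c² such pairs,
R⁰¹(f)^M ≤ c^(2M-2) ∑ P(l, l')^M. Now P(l, l')^M is the probability that all M instances have
label l and prediction l'; on that event the gold vector is the diagonal vector l and the
prediction vector is the diagonal vector l', which escapes the partial label set with probability
at least 1 - γ. These events are disjoint for distinct pairs, so (1 - γ) ∑ P(l, l')^M ≤ R_P(f).
-/

theorem ENNReal.tsum_pi_prod_s14 : ∀ {n : ℕ} {α : Fin n → Type*} (h : ∀ i, α i → ℝ≥0∞),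
    ∑' w : (∀ i, α i), ∏ i, h i (w i) = ∏ i, ∑' a, h i a
  | 0, α, h => by simp
  | n + 1, α, h => by
    rw [← (Fin.consEquiv α).tsum_eq, ENNReal.tsum_prod', Fin.prod_univ_succ]
    simp only [Fin.consEquiv_apply, Fin.prod_univ_succ, Fin.cons_zero, Fin.cons_succ,
      ENNReal.tsum_mul_left, ENNReal.tsum_pi_prod_s14 (fun i => h i.succ), ENNReal.tsum_mul_right]

theorem ENNReal.pow_sum_le_card_mul_sum_pow {ι : Type*} (s : Finset ι) (f : ι → ℝ≥0∞) (n : ℕ) :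
    (∑ i ∈ s, f i) ^ (n + 1) ≤ (s.card : ℝ≥0∞) ^ n * ∑ i ∈ s, f i ^ (n + 1) := by
  rcases em (∃ i ∈ s, f i = ∞) with ⟨i, hi, hfi⟩ | hfin
  · have hs : s.card ≠ 0 := Finset.card_ne_zero_of_mem hi
    have : ∑ i ∈ s, f i ^ (n + 1) = ∞ := ENNReal.sum_eq_top.2 ⟨i, hi, by simp [hfi]⟩
    simp [this, hs]
  · have key := ENNReal.coe_le_coe.2 <| _root_.pow_sum_le_card_mul_sum_pow
      (s := s) (f := fun i => (f i).toNNReal) (fun _ _ => zero_le) n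
    push_cast at key
    have hcoe : ∀ i ∈ s, ((f i).toNNReal : ℝ≥0∞) = f i := fun i hi =>
      ENNReal.coe_toNNReal fun h => hfin ⟨i, hi, h⟩
    have hpow : ∑ i ∈ s, ((f i).toNNReal : ℝ≥0∞) ^ (n + 1) = ∑ i ∈ s, f i ^ (n + 1) :=
      Finset.sum_congr rfl fun i hi => by rw [hcoe i hi]
    rwa [Finset.sum_congr rfl hcoe, hpow] at key

theorem ENNReal.sum_tsum_ite_le_tsum {β W : Type*} (s : Finset β) (A : β → W → Prop)
    [∀ q w, Decidable (A q w)] (F : W → ℝ≥0∞)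
    (hA : ∀ w q q', A q w → A q' w → q = q') :
    ∑ q ∈ s, ∑' w, (if A q w then F w else 0) ≤ ∑' w, F w := by
  rw [← Summable.tsum_finsetSum fun _ _ => ENNReal.summable]
  refine ENNReal.tsum_le_tsum fun w => ?_
  by_cases hw : ∃ q ∈ s, A q w
  · obtain ⟨q, hq, hqw⟩ := hw
    rw [Finset.sum_eq_single_of_mem q hq fun q' _ hne => if_neg fun h => hne (hA w q' q h hqw)]
    exact ite_le_sup _ _ _ |>.trans (by simp)
  · rw [Finset.sum_eq_zero fun q hq => if_neg fun h => hw ⟨q, hq, h⟩]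
    exact zero_le

theorem ENNReal.le_rpow_inv_div_of_pow_mul_le {a b K : ℝ≥0∞} {n : ℕ} (hn : 1 ≤ n) (hb0 : b ≠ 0)
    (hb1 : b ≤ 1) (h : a ^ n * b ≤ K) : a ≤ K ^ (n : ℝ)⁻¹ / b := by
  rw [ENNReal.le_div_iff_mul_le (.inl hb0) (.inl (ne_top_of_le_ne_top one_ne_top hb1)),
    ENNReal.le_rpow_inv_iff (by positivity), ENNReal.rpow_natCast, mul_pow]
  calc a ^ n * b ^ n ≤ a ^ n * b := by gcongr; exact pow_le_of_le_one zero_le hb1 (by omega)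
    _ ≤ K := h

theorem PMF.map_apply_pow {α β : Type*} [DecidableEq β] (p : PMF α) (g : α → β) (b : β) (n : ℕ) :
    p.map g b ^ n = ∑' w : Fin n → α, if ∀ i, g (w i) = b then ∏ i, p (w i) else 0 := by
  rw [p.map_apply, ← Fin.prod_const, ← ENNReal.tsum_pi_prod_s14]
  refine tsum_congr fun w => ?_
  simp only [@eq_comm _ b, Fintype.prod_ite_zero]
  congr

theorem PMF.map_apply_pow_mul_le_tsum {α β : Type*} [DecidableEq β] {n : ℕ} (p : PMF α)
    (g : α → β) (b : β) (Q : (Fin n → α) → ℝ≥0∞) {t : ℝ≥0∞}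
    (hQ : ∀ w : Fin n → α, (∀ i, g (w i) = b) → ∏ i, p (w i) ≠ 0 → t ≤ Q w) :
    p.map g b ^ n * t ≤
      ∑' w : Fin n → α, if ∀ i, g (w i) = b then (∏ i, p (w i)) * Q w else 0 := by
  rw [p.map_apply_pow, ← ENNReal.tsum_mul_right]
  refine ENNReal.tsum_le_tsum fun w => ?_
  split_ifs with hw
  · by_cases h0 : ∏ i, p (w i) = 0
    · simp [h0]
    · gcongr
      exact hQ w hw h0
  · simp

theorem PMF.one_sub_le_tsum_mul_ite_of_tsum_ite_le {α : Type*} (p : PMF (Set α)) (a : α)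
    {γ : ℝ≥0∞} (h : ∑' s, (if a ∈ s then p s else 0) ≤ γ) :
    1 - γ ≤ ∑' s, p s * (if a ∈ s then 0 else 1) := by
  have hsum : ∑' s, p s * (if a ∈ s then 0 else 1) + ∑' s, (if a ∈ s then p s else 0) = 1 := by
    rw [← ENNReal.tsum_add, ← p.tsum_coe]
    exact tsum_congr fun s => by split_ifs <;> simp
  rw [tsub_le_iff_right]
  calc 1 = _ := hsum.symm
    _ ≤ _ := add_le_add_right h _

theorem one_sub_le_tsum_mul_ite_of_forall_eq_diagonal {X Y : Type*} {M : ℕ} (hM : 1 ≤ M)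
    (D : PMF (X × Y)) (f : X → Y) (κ : (Fin M → Y) → PMF (Set (Fin M → Y))) {γ : ℝ≥0∞}
    {l l' : Y} (hamb : (∃ x : X, D (x, l) ≠ 0) →
      (∑' s, if (fun _ : Fin M => l') ∈ s then κ (fun _ => l) s else 0) ≤ γ)
    (w : Fin M → X × Y) (hw : ∀ i, ((w i).2, f (w i).1) = (l, l')) (hD : ∏ i, D (w i) ≠ 0) :
    1 - γ ≤ ∑' s, κ (fun i => (w i).2) s * (if (fun i => f (w i).1) ∈ s then 0 else 1) := by
  have hy : (fun i => (w i).2) = fun _ => l := funext fun i => congrArg Prod.fst (hw i)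
  have hf : (fun i => f (w i).1) = fun _ => l' := funext fun i => congrArg Prod.snd (hw i)
  have hl : ∃ x, D (x, l) ≠ 0 := by
    let i : Fin M := ⟨0, hM⟩
    refine ⟨(w i).1, ?_⟩
    rw [← congrFun hy i]
    exact Finset.prod_ne_zero_iff.1 hD i (Finset.mem_univ i)
  rw [hy, hf]
  exact PMF.one_sub_le_tsum_mul_ite_of_tsum_ite_le _ _ (hamb hl)

theorem stmt14_general {X Y : Type*} [Fintype Y] [DecidableEq Y]
    (c M : ℕ) (hc : Fintype.card Y = c) (hM : 1 ≤ M)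
    (D : PMF (X × Y)) (f : X → Y)
    (κ : (Fin M → Y) → PMF (Set (Fin M → Y)))
    (γ : ℝ≥0∞) (hγ : γ < 1)
    (hamb : ∀ l l' : Y, l ≠ l' → (∃ x : X, D (x, l) ≠ 0) →
      (∑' s : Set (Fin M → Y),
        if (fun _ : Fin M => l') ∈ s then κ (fun _ => l) s else 0) ≤ γ) :
    (∑' z : X × Y, if f z.1 ≠ z.2 then D z else 0)
      ≤ ((c : ℝ≥0∞) ^ (2 * M - 2) *
          ∑' w : Fin M → X × Y,
            (∏ i, D (w i)) *
              (∑' s : Set (Fin M → Y),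
                κ (fun i => (w i).2) s *
                  (if (fun i => f (w i).1) ∈ s then 0 else 1)))
        ^ ((M : ℝ)⁻¹) / (1 - γ) := by
  set g : X × Y → Y × Y := fun z => (z.2, f z.1)
  set pairs : Finset (Y × Y) := Finset.univ.offDiag
  have hR : (∑' z : X × Y, if f z.1 ≠ z.2 then D z else 0) = ∑ q ∈ pairs, D.map g q := by
    rw [← PMF.toOuterMeasure_apply_finset, PMF.toOuterMeasure_map_apply, PMF.toOuterMeasure_apply]
    refine tsum_congr fun z => ?_
    simp [Set.indicator_apply, pairs, g, eq_comm]
  have hcard : (pairs.card : ℝ≥0∞) ≤ (c : ℝ≥0∞) ^ 2 := by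
    rw [Finset.offDiag_card, Finset.card_univ, hc, ← sq]
    exact_mod_cast Nat.sub_le _ _
  apply ENNReal.le_rpow_inv_div_of_pow_mul_le hM (tsub_pos_of_lt hγ).ne' tsub_le_self
  obtain ⟨m, rfl⟩ : ∃ m, M = m + 1 := ⟨M - 1, by omega⟩
  calc _ = (∑ q ∈ pairs, D.map g q) ^ (m + 1) * (1 - γ) := by rw [hR]
    _ ≤ (pairs.card : ℝ≥0∞) ^ m * ∑ q ∈ pairs, D.map g q ^ (m + 1) * (1 - γ) := by
      rw [← Finset.sum_mul, ← mul_assoc]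
      gcongr
      exact ENNReal.pow_sum_le_card_mul_sum_pow _ _ _
    _ ≤ ((c : ℝ≥0∞) ^ 2) ^ m * ∑ q ∈ pairs, ∑' w : Fin (m + 1) → X × Y,
          if ∀ i, g (w i) = q then (∏ i, D (w i)) * ∑' s, κ (fun i => (w i).2) s *
            (if (fun i => f (w i).1) ∈ s then 0 else 1) else 0 := by
      gcongr with q hq
      exact D.map_apply_pow_mul_le_tsum g q _ fun w hw =>
        one_sub_le_tsum_mul_ite_of_forall_eq_diagonal hM D f κ
          (hamb q.1 q.2 (Finset.mem_offDiag.1 hq).2.2) w hw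
    _ ≤ _ := by
      rw [← pow_mul, show 2 * (m + 1) - 2 = 2 * m by omega]
      gcongr
      exact ENNReal.sum_tsum_ite_le_tsum _ _ _ fun w q q' hq hq' => (hq 0).symm.trans (hq' 0)

/-- Generalized multi-instance PLL with a stochastic set-valued transition `κ`
containing the gold vector: if the `M`-ambiguity degree is at most `γ < 1`, then
`R⁰¹(f) ≤ (c^(2M−2) · R_P(f))^(1/M) / (1 − γ)`. -/
theorem stmt14 {X Y : Type*} [Fintype Y] [DecidableEq Y]
    (c M : ℕ) (hc : Fintype.card Y = c) (hM : 1 ≤ M)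
    (D : PMF (X × Y)) (f : X → Y)
    (κ : (Fin M → Y) → PMF (Set (Fin M → Y)))
    (hgold : ∀ (y : Fin M → Y) (s : Set (Fin M → Y)), κ y s ≠ 0 → y ∈ s)
    (γ : ℝ≥0∞) (hγ : γ < 1)
    (hamb : ∀ l l' : Y, l ≠ l' → (∃ x : X, D (x, l) ≠ 0) →
      (∑' s : Set (Fin M → Y),
        if (fun _ : Fin M => l') ∈ s then κ (fun _ => l) s else 0) ≤ γ) :
    (∑' z : X × Y, if f z.1 ≠ z.2 then D z else 0)
      ≤ ((c : ℝ≥0∞) ^ (2 * M - 2) *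
          ∑' w : Fin M → X × Y,
            (∏ i, D (w i)) *
              (∑' s : Set (Fin M → Y),
                κ (fun i => (w i).2) s *
                  (if (fun i => f (w i).1) ∈ s then 0 else 1)))
        ^ ((M : ℝ)⁻¹) / (1 - γ) :=
  stmt14_general c M hc hM D f κ γ hγ hamb
end

section
/- There exists a standard partial label learning instance (a column-stochastic transition matrix T from labels to label sets) with 5 labels satisfying the small ambiguity degree condition (ambiguity degree γ = 1/2 < 1) whose transition matrix has rank 4 < 5 and is hence not left-invertible. -/
/-!
Take the four label sets `{1,2,3}, {1,4,5}, {2,5}, {3,4}` and let `S` be uniform over the two sets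
containing the true label (every label lies in exactly two of them). Then
`P(y' ∈ S | Y = y)` is half the number of sets containing both `y` and `y'`, and two distinct
labels share at most one set, so the ambiguity degree is `1/2`. The transition matrix has an
explicit right inverse, hence rank `4`, which is less than the number `5` of labels, so it
cannot have a left inverse.
-/

open Finset

namespace Matrix

variable {m n R : Type*} [Fintype m] [Fintype n] [CommRing R] [StrongRankCondition R]

theorem rank_eq_card_height_of_mul_eq_one [DecidableEq m] {A : Matrix m n R}
    {B : Matrix n m R} (h : A * B = 1) : A.rank = Fintype.card m :=
  le_antisymm A.rank_le_card_height (by simpa [h, rank_one] using A.rank_mul_le_left B)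

theorem not_exists_mul_eq_one_of_rank_lt [DecidableEq n] {A : Matrix m n R}
    (h : A.rank < Fintype.card n) : ¬∃ P : Matrix n m R, P * A = 1 := by
  rintro ⟨P, hP⟩
  have hle := P.rank_mul_le_right A
  rw [hP, rank_one] at hle
  omega

end Matrix

section UniformTransition

variable {ι α : Type*} [DecidableEq α]

noncomputable def uniformTransition (S : ι → Finset α) (k : ℕ) : Matrix ι α ℝ :=
  fun s y => if y ∈ S s then (k : ℝ)⁻¹ else 0

variable (S : ι → Finset α) (k : ℕ)

theorem uniformTransition_nonneg (s : ι) (y : α) : 0 ≤ uniformTransition S k s y := by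
  unfold uniformTransition
  split_ifs <;> positivity

theorem mem_of_uniformTransition_ne_zero {s : ι} {y : α} (h : uniformTransition S k s y ≠ 0) :
    y ∈ S s := by
  by_contra hy
  exact h (if_neg hy)

variable [Fintype ι]

theorem sum_uniformTransition (y : α) :
    ∑ s, uniformTransition S k s y = #{s | y ∈ S s} / k := by
  simp [uniformTransition, Finset.sum_ite, div_eq_mul_inv]

theorem sum_ite_mem_uniformTransition (y y' : α) :
    (∑ s, if y' ∈ S s then uniformTransition S k s y else 0) =
      #{s | y ∈ S s ∧ y' ∈ S s} / k := by
  simp only [uniformTransition, ← ite_and, and_comm (a := y' ∈ _)]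
  simp [Finset.sum_ite, div_eq_mul_inv]

end UniformTransition

/-- The paper's label sets `{1,2,3}, {1,4,5}, {2,5}, {3,4}`, with labels shifted down by one. -/
def pllSets : Fin 4 → Finset (Fin 5) := ![{0, 1, 2}, {0, 3, 4}, {1, 4}, {2, 3}]

theorem card_filter_mem_pllSets (y : Fin 5) : #{s | y ∈ pllSets s} = 2 := by
  revert y; decide

theorem card_filter_mem_mem_pllSets_le_one {y y' : Fin 5} (h : y ≠ y') :
    #{s | y ∈ pllSets s ∧ y' ∈ pllSets s} ≤ 1 := by
  revert y y'; decide

theorem card_filter_mem_zero_mem_one_pllSets : #{s | 0 ∈ pllSets s ∧ 1 ∈ pllSets s} = 1 := by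
  decide

/-- Twice the inverse of the first four columns of `uniformTransition pllSets 2`,
padded by a zero row. -/
def pllRightInverse : Matrix (Fin 5) (Fin 4) ℝ :=
  !![1, 1, -1, -1; 0, 0, 2, 0; 1, -1, -1, 1; -1, 1, 1, 1; 0, 0, 0, 0]

theorem uniformTransition_pllSets_mul_pllRightInverse :
    uniformTransition pllSets 2 * pllRightInverse = 1 := by
  ext i j
  fin_cases i <;> fin_cases j <;>
    simp [Matrix.mul_apply, Fin.sum_univ_five, uniformTransition, pllSets, pllRightInverse] <;>
    norm_num

theorem rank_uniformTransition_pllSets : (uniformTransition pllSets 2).rank = 4 := by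
  simpa using Matrix.rank_eq_card_height_of_mul_eq_one
    uniformTransition_pllSets_mul_pllRightInverse

/-- There is a 5-label standard PLL instance (column-stochastic transition matrix
with rows indexed by 4 label sets) with ambiguity degree `1/2 < 1` whose
transition matrix has rank `4 < 5` and hence no left inverse. -/
theorem stmt15 :
    ∃ (T : Matrix (Fin 4) (Fin 5) ℝ) (Sset : Fin 4 → Finset (Fin 5)),
      (∀ s y, 0 ≤ T s y) ∧
      (∀ y, ∑ s, T s y = 1) ∧
      (∀ s y, T s y ≠ 0 → y ∈ Sset s) ∧
      (∀ y y' : Fin 5, y ≠ y' →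
        (∑ s, if y' ∈ Sset s then T s y else 0) ≤ 1 / 2) ∧
      (∃ y y' : Fin 5, y ≠ y' ∧
        (∑ s, if y' ∈ Sset s then T s y else 0) = 1 / 2) ∧
      T.rank = 4 ∧
      ¬∃ P : Matrix (Fin 5) (Fin 4) ℝ, P * T = 1 := by
  refine ⟨uniformTransition pllSets 2, pllSets, uniformTransition_nonneg _ _,
    fun y => ?_, fun _ _ => mem_of_uniformTransition_ne_zero _ _, fun y y' hne => ?_,
    ⟨0, 1, by decide, ?_⟩, rank_uniformTransition_pllSets,
    Matrix.not_exists_mul_eq_one_of_rank_lt (by simp [rank_uniformTransition_pllSets])⟩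
  · norm_num [sum_uniformTransition, card_filter_mem_pllSets]
  · rw [sum_ite_mem_uniformTransition, Nat.cast_ofNat]
    gcongr
    exact_mod_cast card_filter_mem_mem_pllSets_le_one hne
  · norm_num [sum_ite_mem_uniformTransition, card_filter_mem_zero_mem_one_pllSets]
end

section
/- There exists a multi-instance PLL problem that is M-unambiguous but whose per-position transition matrices are all non-invertible: take Y = {1,2,3}, M = 3, uniform label marginals P(Y=i)=1/3, and a transition σ partitioning Y^3 into three classes each containing exactly one diagonal vector and containing, for each position k and each pair (observed class, label value), exactly three preimage vectors; then each per-position transition matrix T_k equals the 3×3 all-1/3 matrix, which has rank 1. -/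
lemma rank_third : (Matrix.of fun _ _ : Fin 3 => (1 / 3 : ℝ)).rank = 1 := by
  have hM : (Matrix.of fun _ _ : Fin 3 => (1 / 3 : ℝ))
      = Matrix.vecMulVec (fun _ : Fin 3 => (1 / 3 : ℝ)) (fun _ : Fin 3 => (1 : ℝ)) := by
    ext i j; simp [Matrix.vecMulVec]
  have hprod : (Matrix.of fun _ _ : Fin 3 => (1 / 3 : ℝ))
      = (Matrix.of fun _ : Fin 3 => fun _ : Fin 1 => (1 / 3 : ℝ)) *
        (Matrix.of fun _ : Fin 1 => fun _ : Fin 3 => (1 : ℝ)) := by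
    ext i j
    simp [Matrix.mul_apply]
  have h1 : (Matrix.of fun _ _ : Fin 3 => (1 / 3 : ℝ)).rank ≤ 1 := by
    rw [hprod]
    calc _ ≤ (Matrix.of fun _ : Fin 1 => fun _ : Fin 3 => (1 : ℝ)).rank :=
          Matrix.rank_mul_le_right _ _
      _ ≤ Fintype.card (Fin 1) := Matrix.rank_le_card_height _
      _ = 1 := by simp
  have h0 : (Matrix.of fun _ _ : Fin 3 => (1 / 3 : ℝ)).rank ≠ 0 := by
    intro h
    rw [Matrix.rank, Submodule.finrank_eq_zero, LinearMap.range_eq_bot] at h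
    have h2 := congrFun (congrFun (congrArg DFunLike.coe h) (fun _ => (1 : ℝ))) 0
    simp [Matrix.mulVecLin_apply, Matrix.mulVec, dotProduct,
      Fin.sum_univ_three] at h2
  omega

/-- There is an `M`-unambiguous multi-instance PLL problem (`Y = Fin 3`, `M = 3`,
uniform marginals) all of whose per-position transition matrices equal the
all-`1/3` matrix, which has rank 1 (hence none is invertible). -/
theorem stmt17 :
    ∃ σ : (Fin 3 → Fin 3) → Fin 3,
      Function.Injective (fun y : Fin 3 => σ (fun _ => y)) ∧
      (∀ k i j : Fin 3,
        (Finset.univ.filter (fun y : Fin 3 → Fin 3 => σ y = j ∧ y k = i)).card = 3) ∧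
      (∀ k : Fin 3,
        (Matrix.of fun j i : Fin 3 =>
            ((Finset.univ.filter
                (fun y : Fin 3 → Fin 3 => σ y = j ∧ y k = i)).card : ℝ) * (1 / 3) ^ 2)
          = Matrix.of fun _ _ : Fin 3 => (1 / 3 : ℝ)) ∧
      (∀ k : Fin 3,
        (Matrix.of fun j i : Fin 3 =>
            ((Finset.univ.filter
                (fun y : Fin 3 → Fin 3 => σ y = j ∧ y k = i)).card : ℝ) * (1 / 3) ^ 2).rank
          = 1) := by
  refine ⟨fun y => y 0 + y 1 - y 2, ?_, ?_, ?_, ?_⟩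
  · decide
  · decide
  · intro k
    ext j i
    have h : (Finset.univ.filter
        (fun y : Fin 3 → Fin 3 => y 0 + y 1 - y 2 = j ∧ y k = i)).card = 3 := by
      revert k i j; decide
    simp [h]
    norm_num
  · intro k
    have h : (Matrix.of fun j i : Fin 3 =>
        ((Finset.univ.filter
            (fun y : Fin 3 → Fin 3 => y 0 + y 1 - y 2 = j ∧ y k = i)).card : ℝ) * (1 / 3) ^ 2)
        = Matrix.of fun _ _ : Fin 3 => (1 / 3 : ℝ) := by
      ext j i
      have h3 : (Finset.univ.filter
          (fun y : Fin 3 → Fin 3 => y 0 + y 1 - y 2 = j ∧ y k = i)).card = 3 := by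
        revert k i j; decide
      simp [h3]; norm_num
    rw [h, rank_third]
end

section
/- There exists a multi-instance PLL problem whose transition matrix is invertible but which is not M-unambiguous: with Y = {1,2}, M = 2, σ(y_1,y_2) = 1{y_1 = y_2}, and marginals P(Y=1) = 0.1, P(Y=2) = 0.9, the per-position transition matrix T_1 = [[0.9, 0.1],[0.1, 0.9]] is invertible, yet σ(1,1) = σ(2,2) so M-unambiguity fails. -/
/-- With `Y = Fin 2`, `σ(y₁,y₂) = 1{y₁ = y₂}` and marginals `(0.1, 0.9)`, the
per-position transition matrix is `[[0.9,0.1],[0.1,0.9]]`, which is invertible,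
yet `M`-unambiguity fails since `σ(1,1) = σ(2,2)`. -/
theorem stmt18 :
    ∃ σ : Fin 2 → Fin 2 → Fin 2,
      (∀ a b, σ a b = if a = b then 1 else 0) ∧
      σ 0 0 = σ 1 1 ∧
      (Matrix.of fun s i : Fin 2 =>
          ∑ j : Fin 2, if σ i j = s then (![0.1, 0.9] : Fin 2 → ℝ) j else 0)
        = Matrix.of ![![0.9, 0.1], ![0.1, 0.9]] ∧
      IsUnit (Matrix.of fun s i : Fin 2 =>
          ∑ j : Fin 2, if σ i j = s then (![0.1, 0.9] : Fin 2 → ℝ) j else 0) := by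
  refine ⟨fun a b => if a = b then 1 else 0, fun a b => rfl, rfl, ?_, ?_⟩
  · ext s i
    fin_cases s <;> fin_cases i <;>
      simp [Fin.sum_univ_two, Matrix.of_apply] <;> norm_num
  · rw [Matrix.isUnit_iff_isUnit_det]
    have h : (Matrix.of fun s i : Fin 2 =>
        ∑ j : Fin 2, if (if i = j then (1:Fin 2) else 0) = s then (![0.1, 0.9] : Fin 2 → ℝ) j else 0)
        = Matrix.of ![![0.9, 0.1], ![0.1, 0.9]] := by
      ext s i
      fin_cases s <;> fin_cases i <;>
        simp [Fin.sum_univ_two, Matrix.of_apply] <;> norm_num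
    rw [h]
    simp [Matrix.det_fin_two, Matrix.of_apply]
    norm_num
end
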